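/- arXiv:math/0506165 — 9 statements merged into one kernel-verified Lean document; each statement's English description precedes it below -/
import Mathlib

section
/- For any continuously differentiable function f : [1, ∞) → ℝ with f(x) → 0 as x → ∞ and with f' absolutely integrable, the difference between the sum ∑_{i=1}^∞ f(i) and the integral ∫_1^∞ f(x) dx is bounded in absolute value by (1/2)|f(1)| + (1/2)∫_1^∞ |f'(x)| dx. -/
/-!
Integrating by parts against the sawtooth `x - (a + b) / 2` gives
`(b - a) / 2 * (f a + f b) - ∫_a^b f = ∫_a^b (x - (a + b) / 2) f' x`, whose absolute value is at most
`(b - a) / 2 * ∫_a^b |f'|`. On the unit intervals `[n, n + 1]`, `n ≥ 1`, this bounds the error of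
replacing `f n - ∫_n^{n+1} f` by `(f n - f (n + 1)) / 2`, and these differences telescope to
`f 1 / 2` because `f → 0`.
-/

open MeasureTheory Filter Set Function

theorem integral_sub_midpoint_mul_deriv {f f' : ℝ → ℝ} {a b : ℝ}
    (hf : ∀ x ∈ uIcc a b, HasDerivAt f (f' x) x) (hf' : IntervalIntegrable f' volume a b) :
    ∫ x in a..b, (x - (a + b) / 2) * f' x = (b - a) / 2 * (f a + f b) - ∫ x in a..b, f x := by
  have hu : ∀ x ∈ uIcc a b, HasDerivAt (fun x => x - (a + b) / 2) 1 x :=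
    fun x _ => (hasDerivAt_id x).sub_const _
  rw [intervalIntegral.integral_mul_deriv_eq_deriv_mul hu hf intervalIntegrable_const hf']
  simp only [one_mul]
  ring

theorem abs_trapezoid_sub_integral_le {f f' : ℝ → ℝ} {a b : ℝ} (hab : a ≤ b)
    (hf : ∀ x ∈ Icc a b, HasDerivAt f (f' x) x) (hf' : IntervalIntegrable f' volume a b) :
    |(b - a) / 2 * (f a + f b) - ∫ x in a..b, f x| ≤ (b - a) / 2 * ∫ x in a..b, |f' x| := by
  rw [← uIcc_of_le hab] at hf
  rw [← integral_sub_midpoint_mul_deriv hf hf', ← intervalIntegral.integral_const_mul]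
  refine (intervalIntegral.abs_integral_le_integral_abs hab).trans <|
    intervalIntegral.integral_mono_on hab (hf'.continuousOn_mul (by fun_prop)).abs
      (hf'.abs.const_mul _) fun x hx => ?_
  rw [abs_mul]
  gcongr
  rw [abs_le]
  constructor <;> linarith [hx.1, hx.2]

theorem abs_trapezoid_sub_integral_natCast_add_le {f f' : ℝ → ℝ} {a : ℝ}
    (hf : ∀ x ∈ Ici a, HasDerivAt f (f' x) x) (hf' : IntegrableOn f' (Ioi a)) (n : ℕ) :
    |1 / 2 * (f (n + a) + f (n + a + 1)) - ∫ x in (n + a)..(n + a + 1), f x| ≤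
      1 / 2 * ∫ x in (n + a)..(n + a + 1), |f' x| := by
  have ha : a ≤ n + a := le_add_of_nonneg_left n.cast_nonneg
  have hn : (n + a : ℝ) ≤ n + a + 1 := le_add_of_nonneg_right zero_le_one
  simpa only [add_sub_cancel_left] using abs_trapezoid_sub_integral_le hn
    (fun x hx => hf x (Icc_subset_Ici_self.trans (Ici_subset_Ici.2 ha) hx))
    ((intervalIntegrable_iff_integrableOn_Ioc_of_le hn).2 <|
      hf'.mono_set (Ioc_subset_Ioi_self.trans (Ioi_subset_Ioi ha)))

theorem iUnion_Ioc_natCast_add (a : ℝ) : ⋃ n : ℕ, Ioc (n + a) (n + a + 1) = Ioi a := by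
  ext x
  simp only [mem_iUnion, mem_Ioc, mem_Ioi]
  constructor
  · rintro ⟨n, hn, -⟩
    linarith [n.cast_nonneg (α := ℝ)]
  · intro hx
    have hceil : 1 ≤ ⌈x - a⌉₊ := Nat.one_le_iff_ne_zero.2 <| by
      simpa only [ne_eq, Nat.ceil_eq_zero, not_le] using sub_pos.2 hx
    refine ⟨⌈x - a⌉₊ - 1, ?_, ?_⟩ <;> rw [Nat.cast_sub hceil, Nat.cast_one]
    · linarith [Nat.ceil_lt_add_one (sub_pos.2 hx).le]
    · linarith [Nat.le_ceil (x - a)]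

theorem pairwise_disjoint_Ioc_natCast_add (a : ℝ) :
    Pairwise (Disjoint on fun n : ℕ => Ioc (n + a) (n + a + 1)) := by
  intro m n hmn
  wlog h : m < n generalizing m n
  · exact (this hmn.symm ((Ne.symm hmn).lt_of_le (not_lt.1 h))).symm
  have : (m : ℝ) + 1 ≤ n := by exact_mod_cast h
  exact Ioc_disjoint_Ioc_of_le (by linarith)

theorem hasSum_intervalIntegral_natCast_add {E : Type*} [NormedAddCommGroup E] [NormedSpace ℝ E]
    {μ : Measure ℝ} {g : ℝ → E} {a : ℝ} (hg : IntegrableOn g (Ioi a) μ) :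
    HasSum (fun n : ℕ => ∫ x in (n + a)..(n + a + 1), g x ∂μ) (∫ x in Ioi a, g x ∂μ) := by
  rw [← iUnion_Ioc_natCast_add] at hg ⊢
  simpa only [intervalIntegral.integral_of_le (le_add_of_nonneg_right zero_le_one)] using
    hasSum_integral_iUnion (fun _ => measurableSet_Ioc) (pairwise_disjoint_Ioc_natCast_add a) hg

theorem hasSum_sub_succ_of_tendsto {G : Type*} [AddCommGroup G] [TopologicalSpace G]
    [IsTopologicalAddGroup G] [T2Space G] {u : ℕ → G} (hs : Summable fun n => u n - u (n + 1))
    (hu : Tendsto u atTop (nhds 0)) : HasSum (fun n => u n - u (n + 1)) (u 0) := by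
  refine (hs.hasSum_iff_tendsto_nat).2 ?_
  simp only [Finset.sum_range_sub']
  simpa using tendsto_const_nhds.sub hu

theorem euler_maclaurin_simple_general (f f' : ℝ → ℝ)
    (hderiv : ∀ x ∈ Ici (1 : ℝ), HasDerivAt f (f' x) x)
    (hlim : Tendsto f atTop (nhds 0))
    (hsum : Summable (fun n : ℕ => f (n + 1)))
    (hint : IntegrableOn f (Ioi 1))
    (hint' : IntegrableOn f' (Ioi 1)) :
    |(∑' n : ℕ, f (n + 1)) - ∫ x in Ioi (1 : ℝ), f x| ≤
      (1 / 2) * |f 1| + (1 / 2) * ∫ x in Ioi (1 : ℝ), |f' x| := by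
  set u : ℕ → ℝ := fun n => 1 / 2 * f (n + 1)
  set e : ℕ → ℝ := fun n =>
    1 / 2 * (f (n + 1) + f (n + 1 + 1)) - ∫ x in (n + 1 : ℝ)..(n + 1 + 1), f x
  have he : ∀ n, ‖e n‖ ≤ 1 / 2 * ∫ x in (n + 1 : ℝ)..(n + 1 + 1), |f' x| :=
    abs_trapezoid_sub_integral_natCast_add_le hderiv hint'
  have hJ := (hasSum_intervalIntegral_natCast_add hint'.abs).mul_left (1 / 2)
  have hD := hsum.hasSum.sub (hasSum_intervalIntegral_natCast_add hint)
  have hsplit : ∀ n : ℕ, f (n + 1) - ∫ x in (n + 1 : ℝ)..(n + 1 + 1), f x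
      = (u n - u (n + 1)) + e n := fun n => by
    simp only [u, e]
    push_cast
    ring
  have hu : Tendsto u atTop (nhds 0) := by
    rw [← mul_zero (1 / 2 : ℝ)]
    exact (hlim.comp (tendsto_atTop_add_const_right _ 1 tendsto_natCast_atTop_atTop)).const_mul _
  have hT := hasSum_sub_succ_of_tendsto
    ((hD.summable.sub (Summable.of_norm_bounded hJ.summable he)).congr fun n => by
      rw [hsplit]; ring) hu
  have hE : HasSum e ((∑' n : ℕ, f (n + 1)) - (∫ x in Ioi (1 : ℝ), f x) - u 0) :=
    (hD.sub hT).congr_fun fun n => by rw [hsplit]; ring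
  have hE_le := hE.norm_le_of_bounded hJ he
  simp only [u, Nat.cast_zero, zero_add, Real.norm_eq_abs] at hE_le
  have := abs_sub_abs_le_abs_sub ((∑' n : ℕ, f (n + 1)) - ∫ x in Ioi (1 : ℝ), f x) (1 / 2 * f 1)
  rw [abs_mul, abs_of_pos (by norm_num : (0 : ℝ) < 1 / 2)] at this
  linarith

/-- Euler–Maclaurin (simplest form): for a continuously differentiable `f` on `[1, ∞)`
vanishing at infinity with absolutely integrable derivative, the sum `∑_{i=1}^∞ f(i)`
differs from `∫_1^∞ f` by at most `|f 1|/2 + (1/2)∫_1^∞ |f'|`. -/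
theorem euler_maclaurin_simple (f f' : ℝ → ℝ)
    (hderiv : ∀ x ∈ Ici (1 : ℝ), HasDerivAt f (f' x) x)
    (hcont : ContinuousOn f' (Ici 1))
    (hlim : Tendsto f atTop (nhds 0))
    (hsum : Summable (fun n : ℕ => f (n + 1)))
    (hint : IntegrableOn f (Ioi 1))
    (hint' : IntegrableOn f' (Ioi 1)) :
    |(∑' n : ℕ, f (n + 1)) - ∫ x in Ioi (1 : ℝ), f x| ≤
      (1 / 2) * |f 1| + (1 / 2) * ∫ x in Ioi (1 : ℝ), |f' x| :=
  euler_maclaurin_simple_general f f' hderiv hlim hsum hint hint'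
end

section
/- There exists a finite constant K such that for every p ∈ (0, 1/2), a geometric random variable R with parameter p satisfies E[|log R − E[log R]|³] ≤ K. -/
/-!
Write `n ↦ p * (1 - p) ^ n` for the law of `R - 1`. From `|X - E X| ≤ |X| + E |X|` one gets
`E |X - E X| ^ 3 ≤ 4 E |X| ^ 3 + 4 (E |X|) ^ 3`; with `X = log R + log p = log (p R)` it suffices
to bound `E |log (p R)| ^ k` for `k = 1, 3`. Since `|log y| ^ k ≤ 2 ^ k k! (√y + 1 / √y)`, this reduces to
`E √(p R) ≤ 1`, which follows from `√y ≤ (y + 1) / 2` and `E (p R) = 1`, and to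
`E (1 / √(p R)) ≤ 2`: summation by parts turns `1 / √r ≤ 2 (√r - √(r - 1))` into
`E (1 / √(p R)) ≤ 2 E √(p R)`.
-/

open Real
open scoped Nat

theorem Real.abs_log_pow_le (k : ℕ) {y : ℝ} (hy : 0 < y) :
    |log y| ^ k ≤ 2 ^ k * k ! * (√y + (√y)⁻¹) := by
  have hexp : exp |log y / 2| ≤ √y + (√y)⁻¹ := by
    calc exp |log y / 2| ≤ exp (log y / 2) + exp (-(log y / 2)) := exp_abs_le _
      _ = √y + (√y)⁻¹ := by rw [exp_neg, exp_half, exp_log hy]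
  have hpow := pow_div_factorial_le_exp _ (abs_nonneg (log y / 2)) k
  rw [div_le_iff₀ (by positivity)] at hpow
  calc |log y| ^ k = 2 ^ k * |log y / 2| ^ k := by
        rw [abs_div, abs_two, div_pow, mul_div_cancel₀ _ (by positivity)]
    _ ≤ 2 ^ k * (k ! * exp |log y / 2|) := by gcongr; linarith
    _ ≤ 2 ^ k * k ! * (√y + (√y)⁻¹) := by rw [← mul_assoc]; gcongr

theorem Real.sqrt_le_add_one_div_two {y : ℝ} (hy : 0 ≤ y) : √y ≤ (y + 1) / 2 := by
  have := sqrt_one_add_le (x := y - 1) (by linarith)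
  rw [add_sub_cancel] at this
  linarith

theorem Real.sub_div_sqrt_le_two_mul_sqrt_sub {x y : ℝ} (hy : 0 ≤ y) (hyx : y ≤ x) :
    (x - y) / √x ≤ 2 * (√x - √y) := by
  rcases hyx.eq_or_lt with rfl | hlt
  · simp
  have hx : 0 < √x := sqrt_pos.2 (hy.trans_lt hlt)
  have hsq : √y ≤ √x := sqrt_le_sqrt hyx
  rw [div_le_iff₀ hx]
  nlinarith [sq_sqrt hy, sq_sqrt (hy.trans hyx)]

theorem hasSum_sub_mul_geometric {R : Type*} [CommRing R] [TopologicalSpace R]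
    [IsTopologicalRing R] {a : ℕ → R} {q s : R} (h0 : a 0 = 0)
    (hs : HasSum (fun n ↦ a (n + 1) * q ^ n) s) :
    HasSum (fun n ↦ (a (n + 1) - a n) * q ^ n) ((1 - q) * s) := by
  have hshift : HasSum (fun n ↦ a n * q ^ n) (q * s) := by
    rw [← hasSum_nat_add_iff' 1, Finset.sum_range_one, h0, zero_mul, sub_zero]
    have hterm : (fun n ↦ a (n + 1) * q ^ (n + 1)) = fun n ↦ q * (a (n + 1) * q ^ n) := by
      ext n; ring
    exact hterm ▸ hs.mul_left q
  simpa [sub_mul] using hs.sub hshift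

theorem tsum_abs_sub_tsum_pow_three_le {ι : Type*} {w f : ι → ℝ} (c : ℝ) (hw : ∀ i, 0 ≤ w i)
    (hw1 : HasSum w 1) (h1 : Summable fun i ↦ |f i - c| * w i)
    (h3 : Summable fun i ↦ |f i - c| ^ 3 * w i) :
    ∑' i, |f i - ∑' j, f j * w j| ^ 3 * w i ≤
      4 * ∑' i, |f i - c| ^ 3 * w i + 4 * (∑' i, |f i - c| * w i) ^ 3 := by
  have hnorm : (fun i ↦ ‖(f i - c) * w i‖) = fun i ↦ |f i - c| * w i :=
    funext fun i ↦ by rw [norm_mul, norm_eq_abs, norm_eq_abs, abs_of_nonneg (hw i)]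
  have hsc : Summable fun i ↦ (f i - c) * w i := Summable.of_norm (hnorm ▸ h1)
  have hmean : ∑' j, f j * w j - c = ∑' i, (f i - c) * w i := by
    rw [tsum_congr fun i ↦ (by ring : f i * w i = (f i - c) * w i + c * w i),
      hsc.tsum_add (hw1.summable.mul_left c), tsum_mul_left, hw1.tsum_eq, mul_one,
      add_sub_cancel_right]
  set m := ∑' j, f j * w j
  set A := ∑' i, |f i - c| * w i
  have hdev : |m - c| ≤ A := by
    rw [hmean, ← norm_eq_abs]
    exact (norm_tsum_le_tsum_norm (hnorm ▸ h1)).trans_eq (by rw [hnorm])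
  have hA : 0 ≤ A := tsum_nonneg fun i ↦ mul_nonneg (abs_nonneg _) (hw i)
  have hpoint (i : ι) :
      |f i - m| ^ 3 * w i ≤ 4 * (|f i - c| ^ 3 * w i) + 4 * A ^ 3 * w i := by
    have htri : |f i - m| ≤ |f i - c| + A := by
      calc |f i - m| ≤ |f i - c| + |c - m| := abs_sub_le _ _ _
        _ ≤ |f i - c| + A := by rw [abs_sub_comm c m]; gcongr
    have hcube : |f i - m| ^ 3 ≤ 2 ^ 2 * (|f i - c| ^ 3 + A ^ 3) :=
      (pow_le_pow_left₀ (abs_nonneg _) htri 3).trans (add_pow_le (abs_nonneg _) hA 3)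
    nlinarith [hw i]
  have hmaj : Summable fun i ↦ 4 * (|f i - c| ^ 3 * w i) + 4 * A ^ 3 * w i :=
    (h3.mul_left 4).add (hw1.summable.mul_left _)
  calc ∑' i, |f i - m| ^ 3 * w i
      ≤ ∑' i, (4 * (|f i - c| ^ 3 * w i) + 4 * A ^ 3 * w i) :=
        Summable.tsum_le_tsum hpoint
          (Summable.of_nonneg_of_le (fun i ↦ mul_nonneg (by positivity) (hw i)) hpoint hmaj) hmaj
    _ = 4 * ∑' i, |f i - c| ^ 3 * w i + 4 * A ^ 3 := by
        rw [(h3.mul_left 4).tsum_add (hw1.summable.mul_left _), tsum_mul_left, tsum_mul_left,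
          hw1.tsum_eq, mul_one]

section GeometricLaw

variable {p : ℝ}

theorem geometric_weight_nonneg (hp : 0 ≤ p) (hp1 : p ≤ 1) (n : ℕ) : 0 ≤ p * (1 - p) ^ n :=
  mul_nonneg hp (pow_nonneg (sub_nonneg.2 hp1) n)

theorem hasSum_geometric_weight (hp : 0 < p) (hp1 : p ≤ 1) :
    HasSum (fun n : ℕ ↦ p * (1 - p) ^ n) 1 := by
  have := (hasSum_geometric_of_lt_one (sub_nonneg.2 hp1) (sub_lt_self 1 hp)).mul_left p
  rwa [sub_sub_cancel, mul_inv_cancel₀ hp.ne'] at this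

theorem hasSum_add_one_mul_geometric_weight (hp : 0 < p) (hp1 : p ≤ 1) :
    HasSum (fun n : ℕ ↦ ((n : ℝ) + 1) * p * (p * (1 - p) ^ n)) 1 := by
  have hq : ‖1 - p‖ < 1 := by rw [norm_eq_abs, abs_lt]; constructor <;> linarith
  have h := ((hasSum_coe_mul_geometric_of_norm_lt_one hq).mul_left (p ^ 2)).add
    ((hasSum_geometric_weight hp hp1).mul_left p)
  have hsum : p ^ 2 * ((1 - p) / (1 - (1 - p)) ^ 2) + p * 1 = 1 := by
    rw [sub_sub_cancel]; field_simp; ring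
  have hterm : (fun n : ℕ ↦ ((n : ℝ) + 1) * p * (p * (1 - p) ^ n)) =
      fun n : ℕ ↦ p ^ 2 * ((n : ℝ) * (1 - p) ^ n) + p * (p * (1 - p) ^ n) :=
    funext fun n ↦ by ring
  rw [hsum] at h
  exact hterm ▸ h

theorem sqrt_mul_geometric_weight_le (hp : 0 ≤ p) (hp1 : p ≤ 1) (n : ℕ) :
    √(((n : ℝ) + 1) * p) * (p * (1 - p) ^ n) ≤
      (((n : ℝ) + 1) * p * (p * (1 - p) ^ n) + p * (1 - p) ^ n) / 2 := by
  have := mul_le_mul_of_nonneg_right (sqrt_le_add_one_div_two (y := ((n : ℝ) + 1) * p)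
    (by positivity)) (geometric_weight_nonneg hp hp1 n)
  linarith

theorem summable_sqrt_mul_geometric_weight (hp : 0 < p) (hp1 : p ≤ 1) :
    Summable fun n : ℕ ↦ √(((n : ℝ) + 1) * p) * (p * (1 - p) ^ n) :=
  Summable.of_nonneg_of_le
    (fun n ↦ mul_nonneg (by positivity) (geometric_weight_nonneg hp.le hp1 n))
    (sqrt_mul_geometric_weight_le hp.le hp1)
    (((hasSum_add_one_mul_geometric_weight hp hp1).add
      (hasSum_geometric_weight hp hp1)).div_const 2).summable

theorem tsum_sqrt_mul_geometric_weight_le_one (hp : 0 < p) (hp1 : p ≤ 1) :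
    ∑' n : ℕ, √(((n : ℝ) + 1) * p) * (p * (1 - p) ^ n) ≤ 1 := by
  have hmaj := ((hasSum_add_one_mul_geometric_weight hp hp1).add
    (hasSum_geometric_weight hp hp1)).div_const 2
  have := hasSum_le (sqrt_mul_geometric_weight_le hp.le hp1)
    (summable_sqrt_mul_geometric_weight hp hp1).hasSum hmaj
  linarith

theorem inv_sqrt_mul_geometric_weight_le (hp : 0 ≤ p) (hp1 : p ≤ 1) (n : ℕ) :
    (√(((n : ℝ) + 1) * p))⁻¹ * (p * (1 - p) ^ n) ≤
      2 * (√(((n : ℝ) + 1) * p) - √(n * p)) * (1 - p) ^ n := by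
  have h := sub_div_sqrt_le_two_mul_sqrt_sub (x := ((n : ℝ) + 1) * p) (y := n * p) (by positivity)
    (mul_le_mul_of_nonneg_right (by linarith) hp)
  rw [show ((n : ℝ) + 1) * p - n * p = p by ring] at h
  calc (√(((n : ℝ) + 1) * p))⁻¹ * (p * (1 - p) ^ n) = p / √(((n : ℝ) + 1) * p) * (1 - p) ^ n := by
        ring
    _ ≤ _ := mul_le_mul_of_nonneg_right h (pow_nonneg (sub_nonneg.2 hp1) n)

theorem hasSum_sqrt_sub_mul_geometric (hp : 0 < p) (hp1 : p ≤ 1) :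
    HasSum (fun n : ℕ ↦ 2 * (√(((n : ℝ) + 1) * p) - √(n * p)) * (1 - p) ^ n)
      (2 * ∑' n : ℕ, √(((n : ℝ) + 1) * p) * (p * (1 - p) ^ n)) := by
  have hs : Summable fun n : ℕ ↦ √(((n : ℝ) + 1) * p) * (1 - p) ^ n :=
    ((summable_sqrt_mul_geometric_weight hp hp1).mul_left p⁻¹).congr fun n ↦ by field_simp
  have h := (hasSum_sub_mul_geometric (a := fun n : ℕ ↦ √(n * p)) (q := 1 - p) (by simp)
    (by simpa using hs.hasSum)).mul_left 2
  rw [sub_sub_cancel, ← tsum_mul_left] at h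
  have hterm : (fun n : ℕ ↦ 2 * (√(((n : ℝ) + 1) * p) - √(n * p)) * (1 - p) ^ n) =
      fun n : ℕ ↦ 2 * ((√(((n + 1 : ℕ) : ℝ) * p) - √(n * p)) * (1 - p) ^ n) :=
    funext fun n ↦ by push_cast; ring
  rw [hterm, tsum_congr fun n : ℕ ↦ mul_left_comm (√(((n : ℝ) + 1) * p)) p _]
  exact h

theorem summable_inv_sqrt_mul_geometric_weight (hp : 0 < p) (hp1 : p ≤ 1) :
    Summable fun n : ℕ ↦ (√(((n : ℝ) + 1) * p))⁻¹ * (p * (1 - p) ^ n) :=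
  Summable.of_nonneg_of_le
    (fun n ↦ mul_nonneg (by positivity) (geometric_weight_nonneg hp.le hp1 n))
    (inv_sqrt_mul_geometric_weight_le hp.le hp1) (hasSum_sqrt_sub_mul_geometric hp hp1).summable

theorem tsum_inv_sqrt_mul_geometric_weight_le_two (hp : 0 < p) (hp1 : p ≤ 1) :
    ∑' n : ℕ, (√(((n : ℝ) + 1) * p))⁻¹ * (p * (1 - p) ^ n) ≤ 2 := by
  have := hasSum_le (inv_sqrt_mul_geometric_weight_le hp.le hp1)
    (summable_inv_sqrt_mul_geometric_weight hp hp1).hasSum (hasSum_sqrt_sub_mul_geometric hp hp1)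
  linarith [tsum_sqrt_mul_geometric_weight_le_one hp hp1]

theorem abs_log_pow_mul_geometric_weight_le (hp : 0 < p) (hp1 : p ≤ 1) (k n : ℕ) :
    |log (((n : ℝ) + 1) * p)| ^ k * (p * (1 - p) ^ n) ≤
      2 ^ k * k ! * (√(((n : ℝ) + 1) * p) * (p * (1 - p) ^ n) +
        (√(((n : ℝ) + 1) * p))⁻¹ * (p * (1 - p) ^ n)) := by
  calc |log (((n : ℝ) + 1) * p)| ^ k * (p * (1 - p) ^ n)
      ≤ 2 ^ k * k ! * (√(((n : ℝ) + 1) * p) + (√(((n : ℝ) + 1) * p))⁻¹) * (p * (1 - p) ^ n) :=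
        mul_le_mul_of_nonneg_right (abs_log_pow_le k (y := ((n : ℝ) + 1) * p) (by positivity))
          (geometric_weight_nonneg hp.le hp1 n)
    _ = _ := by ring

theorem summable_abs_log_pow_mul_geometric_weight (hp : 0 < p) (hp1 : p ≤ 1) (k : ℕ) :
    Summable fun n : ℕ ↦ |log (((n : ℝ) + 1) * p)| ^ k * (p * (1 - p) ^ n) :=
  Summable.of_nonneg_of_le
    (fun n ↦ mul_nonneg (by positivity) (geometric_weight_nonneg hp.le hp1 n))
    (abs_log_pow_mul_geometric_weight_le hp hp1 k)
    (((summable_sqrt_mul_geometric_weight hp hp1).add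
      (summable_inv_sqrt_mul_geometric_weight hp hp1)).mul_left _)

theorem tsum_abs_log_pow_mul_geometric_weight_le (hp : 0 < p) (hp1 : p ≤ 1) (k : ℕ) :
    ∑' n : ℕ, |log (((n : ℝ) + 1) * p)| ^ k * (p * (1 - p) ^ n) ≤ 3 * 2 ^ k * k ! := by
  have hs := summable_sqrt_mul_geometric_weight hp hp1
  have hi := summable_inv_sqrt_mul_geometric_weight hp hp1
  calc ∑' n : ℕ, |log (((n : ℝ) + 1) * p)| ^ k * (p * (1 - p) ^ n)
      ≤ ∑' n : ℕ, 2 ^ k * k ! * (√(((n : ℝ) + 1) * p) * (p * (1 - p) ^ n) +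
          (√(((n : ℝ) + 1) * p))⁻¹ * (p * (1 - p) ^ n)) :=
        Summable.tsum_le_tsum (abs_log_pow_mul_geometric_weight_le hp hp1 k)
          (summable_abs_log_pow_mul_geometric_weight hp hp1 k) ((hs.add hi).mul_left _)
    _ = 2 ^ k * k ! * (∑' n : ℕ, √(((n : ℝ) + 1) * p) * (p * (1 - p) ^ n) +
          ∑' n : ℕ, (√(((n : ℝ) + 1) * p))⁻¹ * (p * (1 - p) ^ n)) := by
        rw [tsum_mul_left, hs.tsum_add hi]
    _ ≤ 2 ^ k * k ! * (1 + 2) := by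
        gcongr
        exacts [tsum_sqrt_mul_geometric_weight_le_one hp hp1,
          tsum_inv_sqrt_mul_geometric_weight_le_two hp hp1]
    _ = 3 * 2 ^ k * k ! := by ring

end GeometricLaw

/-- The centred absolute third moment of `log R`, for `R` geometric with parameter
`p ∈ (0, 1/2)`, is bounded by a constant `K` uniformly in `p`. -/
theorem geometric_log_third_moment :
    ∃ K : ℝ, ∀ p : ℝ, 0 < p → p < 1 / 2 →
      (∑' n : ℕ, |Real.log ((n : ℝ) + 1) -
          ∑' m : ℕ, Real.log ((m : ℝ) + 1) * (p * (1 - p) ^ m)| ^ 3 *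
        (p * (1 - p) ^ n)) ≤ K := by
  refine ⟨1440, fun p hp hp2 ↦ ?_⟩
  have hp1 : p ≤ 1 := by linarith
  have hshift (n : ℕ) : log ((n : ℝ) + 1) - -log p = log (((n : ℝ) + 1) * p) := by
    rw [sub_neg_eq_add, log_mul (by positivity) hp.ne']
  have h1 := summable_abs_log_pow_mul_geometric_weight hp hp1 1
  have h3 := summable_abs_log_pow_mul_geometric_weight hp hp1 3
  simp only [pow_one, ← hshift] at h1 h3
  have hcentre := tsum_abs_sub_tsum_pow_three_le (-log p) (geometric_weight_nonneg hp.le hp1)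
    (hasSum_geometric_weight hp hp1) h1 h3
  have b1 := tsum_abs_log_pow_mul_geometric_weight_le hp hp1 1
  have b3 := tsum_abs_log_pow_mul_geometric_weight_le hp hp1 3
  simp only [pow_one, ← hshift] at b1 b3
  calc _ ≤ _ := hcentre
    _ ≤ 4 * (3 * 2 ^ 3 * 3 !) + 4 * (3 * 2 * 1 !) ^ 3 := by gcongr
    _ = 1440 := by norm_num [Nat.factorial]
end

section
/- Let R be a geometric random variable with parameter p ∈ (0, 1/2) and let μ = E[log R]. Then, for p sufficiently small, for all t ≥ 1, P(log R − μ ≥ t) ≤ 2 e^{2γ} e^{−2t}, where γ is Euler's constant. -/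
open Real

set_option maxHeartbeats 1000000 in
/-- Upper-tail bound: for `R` geometric with parameter `p ∈ (0, 1/2)` sufficiently
small, with `μ = E[log R]`, for all `t ≥ 1` we have
`P(log R − μ ≥ t) ≤ 2 e^{2γ} e^{−2t}`. -/
theorem geometric_log_upper_tail :
    ∃ p₀ > (0 : ℝ), ∀ p : ℝ, 0 < p → p < p₀ → p < 1 / 2 → ∀ t : ℝ, 1 ≤ t →
      (∑' n : ℕ, (if (∑' m : ℕ, Real.log ((m : ℝ) + 1) * (p * (1 - p) ^ m)) + t ≤
            Real.log ((n : ℝ) + 1)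
          then p * (1 - p) ^ n else 0)) ≤
        2 * Real.exp (2 * Real.eulerMascheroniConstant) * Real.exp (-2 * t) := by
  refine ⟨1/100, by norm_num, ?_⟩
  intro p hp0 hp01 hp2 t ht
  set q : ℝ := 1 - p with hq
  have hq0 : 0 < q := by rw [hq]; linarith
  have hq1 : q < 1 := by rw [hq]; linarith
  have hq0' : (0:ℝ) ≤ q := hq0.le
  have h1q : 1 - q = p := by rw [hq]; ring
  have hgeo : Summable fun n : ℕ => p * q ^ n :=
    (summable_geometric_of_lt_one hq0' hq1).mul_left p
  -- summability of the series defining μ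
  have hlogle : ∀ m : ℕ, Real.log ((m:ℝ)+1) ≤ (m:ℝ) := by
    intro m
    have := Real.log_le_sub_one_of_pos (x := (m:ℝ)+1) (by positivity)
    linarith
  have hlognn : ∀ m : ℕ, 0 ≤ Real.log ((m:ℝ)+1) := by
    intro m
    exact Real.log_nonneg (by simp)
  have hμs : Summable fun m : ℕ => Real.log ((m:ℝ)+1) * (p * q ^ m) := by
    have h1 : Summable fun m : ℕ => ((m:ℝ) ^ 1 * q ^ m) * p := by
      exact (summable_pow_mul_geometric_of_norm_lt_one 1
        (r := q) (by rwa [Real.norm_eq_abs, abs_of_nonneg hq0'])).mul_right p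
    refine Summable.of_nonneg_of_le (fun m => ?_) (fun m => ?_) h1
    · exact mul_nonneg (hlognn m) (by positivity)
    · have h2 := hlogle m
      have h4 : Real.log ((m:ℝ)+1) * (p * q^m) ≤ (m:ℝ) * (p * q^m) :=
        mul_le_mul_of_nonneg_right h2 (by positivity)
      calc Real.log ((m:ℝ)+1) * (p * q^m) ≤ (m:ℝ) * (p * q^m) := h4
        _ = (m:ℝ)^1 * q^m * p := by ring
  set μ : ℝ := ∑' m : ℕ, Real.log ((m:ℝ)+1) * (p * q ^ m) with hμdef
  -- the telescoping increments
  set d : ℕ → ℝ := fun k => Real.log ((k:ℝ)+2) - Real.log ((k:ℝ)+1) with hd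
  have hd0 : ∀ k, 0 ≤ d k := by
    intro k
    have := Real.log_le_log (x := (k:ℝ)+1) (y := (k:ℝ)+2) (by positivity) (by linarith)
    simp only [hd]; linarith
  have hd_le : ∀ k : ℕ, d k ≤ 1/((k:ℝ)+1) := by
    intro k
    have hk1 : (0:ℝ) < (k:ℝ)+1 := by positivity
    have hk2 : (0:ℝ) < (k:ℝ)+2 := by positivity
    have h1 : Real.log (((k:ℝ)+2)/((k:ℝ)+1)) ≤ ((k:ℝ)+2)/((k:ℝ)+1) - 1 :=
      Real.log_le_sub_one_of_pos (by positivity)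
    rw [Real.log_div hk2.ne' hk1.ne'] at h1
    have h2 : ((k:ℝ)+2)/((k:ℝ)+1) - 1 = 1/((k:ℝ)+1) := by field_simp; norm_num
    rw [h2] at h1
    simp only [hd]; linarith
  have hd_ge : ∀ k : ℕ, 1/((k:ℝ)+2) ≤ d k := by
    intro k
    have hk1 : (0:ℝ) < (k:ℝ)+1 := by positivity
    have hk2 : (0:ℝ) < (k:ℝ)+2 := by positivity
    have h1 : Real.log (((k:ℝ)+1)/((k:ℝ)+2)) ≤ ((k:ℝ)+1)/((k:ℝ)+2) - 1 :=
      Real.log_le_sub_one_of_pos (by positivity)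
    rw [Real.log_div hk1.ne' hk2.ne'] at h1
    have h2 : ((k:ℝ)+1)/((k:ℝ)+2) - 1 = -(1/((k:ℝ)+2)) := by field_simp; ring
    rw [h2] at h1
    simp only [hd]; linarith
  -- the double-indexed family
  set F : ℕ × ℕ → ℝ := fun km => if km.1 < km.2 then d km.1 * (p * q ^ km.2) else 0 with hF
  have hF0 : ∀ km, 0 ≤ F km := by
    intro km
    simp only [hF]
    split
    · exact mul_nonneg (hd0 _) (by positivity)
    · exact le_refl 0
  have hslice : ∀ k : ℕ, Summable (fun m => F (k, m)) := by
    intro k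
    refine Summable.of_nonneg_of_le (fun m => hF0 (k,m)) (fun m => ?_) (hgeo.mul_left (d k))
    simp only [hF]
    split
    · exact le_refl _
    · exact mul_nonneg (hd0 _) (by positivity)
  have hslicesum : ∀ k : ℕ, ∑' m, F (k, m) = d k * q ^ (k+1) := by
    intro k
    have h1 := Summable.sum_add_tsum_nat_add (f := fun m => F (k,m)) (k+1) (hslice k)
    have h2 : ∑ i ∈ Finset.range (k+1), F (k,i) = 0 := by
      refine Finset.sum_eq_zero (fun i hi => ?_)
      simp only [Finset.mem_range] at hi
      simp only [hF]
      rw [if_neg (by omega)]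
    have h3 : ∀ i : ℕ, F (k, i + (k+1)) = (d k * (p * q ^ (k+1))) * q ^ i := by
      intro i
      simp only [hF]
      rw [if_pos (by omega), pow_add]
      ring
    have h4 : ∑' i : ℕ, F (k, i + (k+1)) = (d k * (p * q ^ (k+1))) * (1 - q)⁻¹ := by
      rw [tsum_congr h3, tsum_mul_left, tsum_geometric_of_lt_one hq0' hq1]
    rw [h2, h4, zero_add] at h1
    rw [← h1, h1q]
    field_simp
  have hdq : Summable (fun k : ℕ => d k * q ^ (k+1)) := by
    refine Summable.of_nonneg_of_le (fun k => mul_nonneg (hd0 k) (by positivity))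
      (fun k => ?_) ((summable_geometric_of_lt_one hq0' hq1).mul_left q)
    have h1 : d k ≤ 1 := le_trans (hd_le k) (by
      rw [div_le_one (by positivity)]; simp)
    have h2 : (0:ℝ) ≤ q ^ k := by positivity
    calc d k * q ^ (k+1) ≤ 1 * q ^ (k+1) := by
          apply mul_le_mul_of_nonneg_right h1 (by positivity)
      _ = q * q ^ k := by ring
  have hFsum : Summable F := by
    rw [summable_prod_of_nonneg hF0]
    exact ⟨hslice, by simpa only [hslicesum] using hdq⟩
  have hsliceM : ∀ m : ℕ, Summable (fun k => F (k, m)) := by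
    intro m
    refine summable_of_ne_finset_zero (s := Finset.range m) (fun k hk => ?_)
    simp only [Finset.mem_range, not_lt] at hk
    simp only [hF]
    rw [if_neg (by omega)]
  have hinner : ∀ m : ℕ, ∑' k, F (k, m) = Real.log ((m:ℝ)+1) * (p * q ^ m) := by
    intro m
    rw [tsum_eq_sum (s := Finset.range m) (fun k hk => by
      simp only [Finset.mem_range, not_lt] at hk
      simp only [hF]; rw [if_neg (by omega)])]
    have h5 : ∀ k ∈ Finset.range m, F (k, m) = d k * (p * q ^ m) := by
      intro k hk
      simp only [Finset.mem_range] at hk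
      simp only [hF]; rw [if_pos (by omega)]
    rw [Finset.sum_congr rfl h5, ← Finset.sum_mul]
    congr 1
    have h6 := Finset.sum_range_sub (f := fun k : ℕ => Real.log ((k:ℝ)+1)) m
    have h8 : ∑ i ∈ Finset.range m, d i
        = ∑ i ∈ Finset.range m,
          (Real.log (((i+1:ℕ):ℝ)+1) - Real.log ((i:ℝ)+1)) := by
      refine Finset.sum_congr rfl (fun i _ => ?_)
      simp only [hd]
      push_cast
      ring_nf
    rw [h8, h6]
    simp
  have hμ_eq : μ = ∑' k, d k * q ^ (k+1) := by
    calc μ = ∑' m : ℕ, ∑' k : ℕ, F (k, m) := by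
          rw [hμdef]; exact (tsum_congr hinner).symm
      _ = ∑' k : ℕ, ∑' m : ℕ, F (k, m) :=
          Summable.tsum_comm' (f := fun k m => F (k, m)) hFsum hslice hsliceM
      _ = ∑' k, d k * q ^ (k+1) := tsum_congr hslicesum
  -- lower bound for μ via the log series
  have hlog1 : HasSum (fun n : ℕ => q^(n+1)/((n:ℝ)+1)) (-Real.log p) := by
    have := hasSum_pow_div_log_of_abs_lt_one
      (x := q) (by rw [abs_of_nonneg hq0']; exact hq1)
    rwa [h1q] at this
  have hshift := Summable.sum_add_tsum_nat_add (f := fun n : ℕ => q^(n+1)/((n:ℝ)+1)) 1 hlog1.summable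
  rw [hlog1.tsum_eq] at hshift
  have hmid : Summable (fun n : ℕ => q^(n+1+1)/((n:ℝ)+1+1)) := by
    have := (summable_nat_add_iff (f := fun n : ℕ => q^(n+1)/((n:ℝ)+1)) 1).mpr hlog1.summable
    refine this.congr (fun n => ?_)
    push_cast
    ring_nf
  have htail : ∑' n : ℕ, q^(n+1+1)/((n:ℝ)+1+1) = -Real.log p - q := by
    have h9 : ∑ i ∈ Finset.range 1, q^(i+1)/((i:ℝ)+1) = q := by simp
    have h10 : ∑' n : ℕ, q^(n+1+1)/(((n+1:ℕ):ℝ)+1) = ∑' n : ℕ, q^(n+1+1)/((n:ℝ)+1+1) := by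
      refine tsum_congr (fun n => ?_)
      push_cast
      ring_nf
    rw [h9] at hshift
    push_cast at hshift ⊢
    linarith [hshift]
  have hcmp : ∀ k : ℕ, q^(k+1+1)/((k:ℝ)+1+1) ≤ q * (d k * q^(k+1)) := by
    intro k
    have h1 := hd_ge k
    have h2 : (0:ℝ) < (k:ℝ)+2 := by positivity
    have h3 : (0:ℝ) ≤ q ^ (k+1) := by positivity
    have : q^(k+1+1)/((k:ℝ)+1+1) = (q * q^(k+1)) * (1/((k:ℝ)+2)) := by
      rw [pow_succ]; ring_nf
    rw [this]
    calc (q * q^(k+1)) * (1/((k:ℝ)+2)) ≤ (q * q^(k+1)) * d k := by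
          apply mul_le_mul_of_nonneg_left h1 (by positivity)
      _ = q * (d k * q^(k+1)) := by ring
  have hμ0 : 0 ≤ μ := by
    rw [hμdef]
    exact tsum_nonneg (fun m => mul_nonneg (hlognn m) (by positivity))
  have hμ_ge : -Real.log p - 1 ≤ μ := by
    have h5 : ∑' n : ℕ, q^(n+1+1)/((n:ℝ)+1+1) ≤ ∑' k : ℕ, q * (d k * q^(k+1)) :=
      Summable.tsum_le_tsum hcmp hmid (hdq.mul_left q)
    rw [tsum_mul_left, ← hμ_eq, htail] at h5
    have h6 : q * μ ≤ μ := mul_le_of_le_one_left hμ0 hq1.le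
    linarith
  have hlogp_neg : Real.log p < 0 := Real.log_neg hp0 (by linarith)
  -- the tail bound
  set x : ℝ := Real.exp (μ + t) with hx
  have hx1 : 1 ≤ x := by
    rw [hx, show (1:ℝ) = Real.exp 0 from (Real.exp_zero).symm]
    apply Real.exp_le_exp.mpr
    linarith
  have hpx : Real.exp (t - 1) ≤ p * x := by
    have h1 : Real.exp (-Real.log p - 1 + t) ≤ x := Real.exp_le_exp.mpr (by linarith)
    have h2 : p * Real.exp (-Real.log p - 1 + t) = Real.exp (t - 1) := by
      nth_rewrite 1 [← Real.exp_log hp0]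
      rw [← Real.exp_add]
      congr 1
      ring
    calc Real.exp (t-1) = p * Real.exp (-Real.log p - 1 + t) := h2.symm
      _ ≤ p * x := by apply mul_le_mul_of_nonneg_left h1 hp0.le
  set N : ℕ := ⌈x⌉₊ - 1 with hN
  have hceil1 : 1 ≤ ⌈x⌉₊ := by
    rw [Nat.one_le_ceil_iff]
    linarith
  have hNx : x - 1 ≤ (N:ℝ) := by
    have h1 : x ≤ (⌈x⌉₊:ℝ) := Nat.le_ceil x
    rw [hN]
    push_cast [Nat.cast_sub hceil1]
    linarith
  have hterm : ∀ n : ℕ, (if μ + t ≤ Real.log ((n:ℝ)+1) then p * q^n else 0)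
      ≤ (if N ≤ n then p * q^n else 0) := by
    intro n
    by_cases h : μ + t ≤ Real.log ((n:ℝ)+1)
    · rw [if_pos h, if_pos ?_]
      have hxn : x ≤ (n:ℝ)+1 := by
        rw [hx]
        calc Real.exp (μ+t) ≤ Real.exp (Real.log ((n:ℝ)+1)) := Real.exp_le_exp.mpr h
          _ = (n:ℝ)+1 := Real.exp_log (by positivity)
      have h2 : ⌈x⌉₊ ≤ n + 1 := Nat.ceil_le.mpr (by push_cast; linarith)
      omega
    · rw [if_neg h]
      split
      · positivity
      · exact le_refl 0
  have hTsum1 : Summable (fun n : ℕ => if μ + t ≤ Real.log ((n:ℝ)+1) then p * q^n else 0) := by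
    refine Summable.of_nonneg_of_le (fun n => ?_) (fun n => ?_) hgeo
    · split
      · positivity
      · exact le_refl 0
    · split
      · exact le_refl _
      · positivity
  have hTsum2 : Summable (fun n : ℕ => if N ≤ n then p * q^n else 0) := by
    refine Summable.of_nonneg_of_le (fun n => ?_) (fun n => ?_) hgeo
    · split
      · positivity
      · exact le_refl 0
    · split
      · exact le_refl _
      · positivity
  have hT' : ∑' n : ℕ, (if N ≤ n then p * q^n else 0) = q ^ N := by
    have h1 := Summable.sum_add_tsum_nat_add (f := fun n : ℕ => if N ≤ n then p * q^n else 0) N hTsum2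
    have h2 : ∑ i ∈ Finset.range N, (if N ≤ i then p * q^i else 0) = 0 := by
      refine Finset.sum_eq_zero (fun i hi => ?_)
      simp only [Finset.mem_range] at hi
      rw [if_neg (by omega)]
    have h3 : ∀ i : ℕ, (if N ≤ i + N then p * q^(i+N) else 0) = (p * q^N) * q^i := by
      intro i
      rw [if_pos (by omega), pow_add]
      ring
    have h4 : ∑' i : ℕ, (if N ≤ i + N then p * q^(i+N) else 0) = (p * q^N) * (1-q)⁻¹ := by
      rw [tsum_congr h3, tsum_mul_left, tsum_geometric_of_lt_one hq0' hq1]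
    rw [h2, h4, zero_add, h1q] at h1
    rw [← h1]
    field_simp
  have hqexp : q ≤ Real.exp (-p) := by
    have := Real.add_one_le_exp (-p)
    rw [hq]; linarith
  have hstep : (∑' n : ℕ, (if μ + t ≤ Real.log ((n:ℝ)+1) then p * q^n else 0))
      ≤ Real.exp (p - Real.exp (t-1)) := by
    calc (∑' n : ℕ, (if μ + t ≤ Real.log ((n:ℝ)+1) then p * q^n else 0))
        ≤ ∑' n : ℕ, (if N ≤ n then p * q^n else 0) := Summable.tsum_le_tsum hterm hTsum1 hTsum2
      _ = q ^ N := hT'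
      _ ≤ Real.exp (-p) ^ N := pow_le_pow_left₀ hq0' hqexp N
      _ = Real.exp ((N:ℝ) * (-p)) := (Real.exp_nat_mul (-p) N).symm
      _ ≤ Real.exp ((x - 1) * (-p)) := by
          apply Real.exp_le_exp.mpr
          nlinarith [hNx, hp0]
      _ = Real.exp (p - p * x) := by congr 1; ring
      _ ≤ Real.exp (p - Real.exp (t-1)) := by
          apply Real.exp_le_exp.mpr
          linarith
  refine le_trans hstep ?_
  -- final numeric inequality
  have hrhs : 2 * Real.exp (2 * Real.eulerMascheroniConstant) * Real.exp (-2*t)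
      = Real.exp (Real.log 2 + 2 * Real.eulerMascheroniConstant + -2*t) := by
    rw [Real.exp_add, Real.exp_add, Real.exp_log two_pos]
  rw [hrhs]
  apply Real.exp_le_exp.mpr
  have he : (1 + (t-1)/4)^4 ≤ Real.exp (t-1) := by
    have h1 : Real.exp (t-1) = (Real.exp ((t-1)/4))^4 := by
      rw [← Real.exp_nat_mul]
      congr 1
      push_cast
      ring
    have h2 : 1 + (t-1)/4 ≤ Real.exp ((t-1)/4) := by
      have := Real.add_one_le_exp ((t-1)/4)
      linarith
    rw [h1]
    apply pow_le_pow_left₀ (by linarith) h2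
  have hγ := Real.one_half_lt_eulerMascheroniConstant
  have hl2 := Real.log_two_gt_d9
  nlinarith [sq_nonneg (t - 1 - 4/3), pow_nonneg (show (0:ℝ) ≤ t-1 by linarith) 3,
    pow_nonneg (show (0:ℝ) ≤ t-1 by linarith) 4, he, ht]
end

section
/- The function f(p) = Γ(0, −log(1−p))/(1−p) on (0,1) satisfies −f'(p) ≤ 1/(p(1−p)), and consequently for 0 < p ≤ q < 1, f(p) − f(q) ≤ (q−p)/(p(1−p)). -/
/-!
Write `E₁(c) = ∫_c^∞ e^{-t}/t dt` and `c(p) = -log(1-p)`, so that `e^{-c(p)} = 1-p` and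
`p ≤ c(p)`. For `p ≤ q`, `E₁(c(p)) - E₁(c(q))` is the integral of `e^{-t}/t` over
`[c(p), c(q)]`, hence at most `(e^{-c(p)} - e^{-c(q)})/c(p) ≤ (q-p)/p`; since `E₁ ≥ 0` and
`1/(1-p) ≤ 1/(1-q)`, this gives `f(p) - f(q) ≤ (q-p)/(p(1-p))`. Letting `q ↓ p` turns this
one-sided difference bound into the bound on `-f'(p)`.
-/

open MeasureTheory Set Real Filter Topology

theorem neg_deriv_le_of_eventually_sub_le {f : ℝ → ℝ} {x K : ℝ} (hK : 0 ≤ K)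
    (h : ∀ᶠ y in 𝓝[>] x, f x - f y ≤ K * (y - x)) : -deriv f x ≤ K := by
  by_cases hfx : DifferentiableAt ℝ f x
  · have hslope : Tendsto (slope f x) (𝓝[>] x) (𝓝 (deriv f x)) :=
      (hasDerivAt_iff_tendsto_slope.1 hfx.hasDerivAt).mono_left (nhdsGT_le_nhdsNE x)
    have hbound : ∀ᶠ y in 𝓝[>] x, -K ≤ slope f x y := by
      filter_upwards [h, self_mem_nhdsWithin] with y hy hxy
      rw [slope_def_field, le_div_iff₀ (sub_pos.2 hxy)]
      linarith
    linarith [ge_of_tendsto hslope hbound]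
  · simpa [deriv_zero_of_not_differentiableAt hfx] using hK

noncomputable def expIntegralE₁ (c : ℝ) : ℝ := ∫ t in Ioi c, exp (-t) / t

theorem integrableOn_exp_neg_div_self_Ioi {a : ℝ} (ha : 0 < a) :
    IntegrableOn (fun t ↦ exp (-t) / t) (Ioi a) := by
  refine ((integrableOn_exp_neg_Ioi a).div_const a).mono' ?_ ?_
  · exact (ContinuousOn.div (by fun_prop) continuousOn_id fun t ht ↦ (ha.trans ht).ne')
      |>.aestronglyMeasurable measurableSet_Ioi
  · filter_upwards [ae_restrict_mem measurableSet_Ioi] with t ht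
    rw [norm_div, norm_of_nonneg (exp_pos _).le, norm_of_nonneg (ha.trans ht).le]
    exact div_le_div_of_nonneg_left (exp_pos _).le ha ht.le

theorem expIntegralE₁_nonneg {a : ℝ} (ha : 0 ≤ a) : 0 ≤ expIntegralE₁ a :=
  setIntegral_nonneg measurableSet_Ioi fun _ ht ↦ div_nonneg (exp_pos _).le (ha.trans_lt ht).le

theorem expIntegralE₁_sub_le {a b : ℝ} (ha : 0 < a) (hab : a ≤ b) :
    expIntegralE₁ a - expIntegralE₁ b ≤ (exp (-a) - exp (-b)) / a := by
  calc expIntegralE₁ a - expIntegralE₁ b = ∫ t in a..b, exp (-t) / t :=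
        intervalIntegral.integral_Ioi_sub_Ioi (integrableOn_exp_neg_div_self_Ioi ha) hab
    _ ≤ ∫ t in a..b, exp (-t) / a := by
        refine intervalIntegral.integral_mono_on hab ?_ ?_ fun t ht ↦ ?_
        · exact ContinuousOn.intervalIntegrable_of_Icc hab
            (ContinuousOn.div (by fun_prop) continuousOn_id fun t ht ↦ (ha.trans_le ht.1).ne')
        · exact (by fun_prop : Continuous fun t ↦ exp (-t) / a).intervalIntegrable a b
        · exact div_le_div_of_nonneg_left (exp_pos _).le ha ht.1
    _ = (exp (-a) - exp (-b)) / a := by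
        rw [intervalIntegral.integral_div,
          ← intervalIntegral.integral_Ioi_sub_Ioi (integrableOn_exp_neg_Ioi a) hab,
          integral_exp_neg_Ioi, integral_exp_neg_Ioi]

theorem expIntegralE₁_neg_log_one_sub_div_sub_le {p q : ℝ} (hp : 0 < p) (hpq : p ≤ q)
    (hq : q < 1) :
    expIntegralE₁ (-log (1 - p)) / (1 - p) - expIntegralE₁ (-log (1 - q)) / (1 - q) ≤
      (q - p) / (p * (1 - p)) := by
  have h1p : 0 < 1 - p := by linarith
  have h1q : 0 < 1 - q := by linarith
  have hp_le : p ≤ -log (1 - p) := by linarith [log_le_sub_one_of_pos h1p]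
  have hlog_le : -log (1 - p) ≤ -log (1 - q) := by
    linarith [log_le_log h1q (by linarith : 1 - q ≤ 1 - p)]
  have hE₁q : 0 ≤ expIntegralE₁ (-log (1 - q)) :=
    expIntegralE₁_nonneg (hp.le.trans (hp_le.trans hlog_le))
  have hdiff := expIntegralE₁_sub_le (hp.trans_le hp_le) hlog_le
  rw [neg_neg, neg_neg, exp_log h1p, exp_log h1q] at hdiff
  calc expIntegralE₁ (-log (1 - p)) / (1 - p) - expIntegralE₁ (-log (1 - q)) / (1 - q)
      ≤ (expIntegralE₁ (-log (1 - p)) - expIntegralE₁ (-log (1 - q))) / (1 - p) := by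
        rw [sub_div]
        gcongr
    _ ≤ (1 - p - (1 - q)) / -log (1 - p) / (1 - p) := by gcongr
    _ ≤ (q - p) / p / (1 - p) := by
        rw [sub_sub_sub_cancel_left]
        gcongr
    _ = (q - p) / (p * (1 - p)) := div_div _ _ _

/-- The function `f(p) = Γ(0, −log(1−p))/(1−p)` on `(0,1)`, where
`Γ(0,c) = ∫_c^∞ e^{−t}/t dt`, satisfies `−f'(p) ≤ 1/(p(1−p))`, and consequently
`f(p) − f(q) ≤ (q−p)/(p(1−p))` for `0 < p ≤ q < 1`. -/
theorem incomplete_gamma_fn_deriv_bound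
    (f : ℝ → ℝ)
    (hf : ∀ p ∈ Ioo (0 : ℝ) 1,
      f p = (∫ t in Ioi (-Real.log (1 - p)), Real.exp (-t) / t) / (1 - p)) :
    (∀ p ∈ Ioo (0 : ℝ) 1, -deriv f p ≤ 1 / (p * (1 - p))) ∧
    (∀ p q : ℝ, 0 < p → p ≤ q → q < 1 → f p - f q ≤ (q - p) / (p * (1 - p))) := by
  have hsub : ∀ p q : ℝ, 0 < p → p ≤ q → q < 1 → f p - f q ≤ (q - p) / (p * (1 - p)) := by
    intro p q hp hpq hq
    rw [hf p ⟨hp, hpq.trans_lt hq⟩, hf q ⟨hp.trans_le hpq, hq⟩]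
    exact expIntegralE₁_neg_log_one_sub_div_sub_le hp hpq hq
  refine ⟨fun p ⟨hp, hp1⟩ ↦ ?_, hsub⟩
  refine neg_deriv_le_of_eventually_sub_le (one_div_nonneg.2 (mul_pos hp (sub_pos.2 hp1)).le) ?_
  filter_upwards [Ioo_mem_nhdsGT hp1] with q hq
  rw [one_div_mul_eq_div]
  exact hsub p q hp hq.1.le hq.2
end

section
/- Let X₁, X₂, … be i.i.d. random variables uniform on a finite set of size N, fix k, and let b₁, …, b_k be k distinct elements of the set. Define R_j = min{t ≥ 1 : X_t = b_j}. Conditional on the ordering R_{τ(1)} < R_{τ(2)} < … < R_{τ(k)}, the gaps R_{τ(1)}, R_{τ(2)} − R_{τ(1)}, …, R_{τ(k)} − R_{τ(k−1)} are independent, with the j-th gap geometric of parameter (k+1−j)/N. -/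
/-!
If each target `a j` is first hit at time `r j`, then every `X t` with `t ≤ max r` lies in an
explicit set `allowed a r t`: inside the `j`-th gap it avoids the `k - j` targets not yet hit,
and at the end of the gap it equals the next target. By independence, the probability that the
targets are hit in the order `σ` with gaps `g` is therefore
`∏ j, (1 / N) * (1 - (k - j) / N) ^ (g j - 1)`. The hitting times are a.s. finite, so summing
this over all gap vectors (a product of geometric series) gives
`μ {τ = σ} = ∏ j, (1 / N) * ((k - j) / N)⁻¹`, and the ratio of the two is the claim.
-/

open MeasureTheory ProbabilityTheory Finset
open scoped ENNReal

theorem Tuple.perm_eq_of_strictMono {α : Type*} [LinearOrder α] {n : ℕ} {f : Fin n → α}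
    {σ τ : Equiv.Perm (Fin n)} (hσ : StrictMono (f ∘ σ)) (hτ : StrictMono (f ∘ τ)) :
    σ = τ := by
  have hf : Function.Injective f := hσ.injective.of_comp_right σ.surjective
  ext j
  exact congrArg Fin.val (hf (congrFun (Tuple.unique_monotone hσ.monotone hτ.monotone) j))

theorem Finset.prod_Ioc_eq_prod_range_prod_Ioc {M : Type*} [CommMonoid M] (f : ℕ → M)
    {c : ℕ → ℕ} (hc : Monotone c) (n : ℕ) :
    ∏ t ∈ Ioc (c 0) (c n), f t = ∏ m ∈ range n, ∏ t ∈ Ioc (c m) (c (m + 1)), f t := by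
  induction n with
  | zero => simp
  | succ n ih =>
    rw [prod_range_succ, ← ih, prod_Ioc_consecutive _ (hc n.zero_le) (hc n.le_succ)]

theorem ENNReal.tsum_pi_prod {β : Type*} {k : ℕ} (f : Fin k → β → ℝ≥0∞) :
    ∑' g : Fin k → β, ∏ j, f j (g j) = ∏ j, ∑' b, f j b := by
  induction k with
  | zero => simp
  | succ n ih =>
    rw [← (Fin.consEquiv fun _ => β).tsum_eq, ENNReal.tsum_prod', Fin.prod_univ_succ,
      ← ih, ← ENNReal.tsum_mul_right]
    refine tsum_congr fun b => ?_
    rw [← ENNReal.tsum_mul_left]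
    refine tsum_congr fun g => ?_
    simp [Fin.consEquiv, Fin.prod_univ_succ]

namespace HittingTimeGaps

section Gaps

variable {k : ℕ}

/-- Padding the gaps by `1` beyond `k` makes `cumGap g` strictly monotone on all of `ℕ`. -/
def cumGap (g : Fin k → ℕ) (m : ℕ) : ℕ :=
  ∑ i ∈ range m, if h : i < k then g ⟨i, h⟩ else 1

def gaps (r : Fin k → ℕ) (j : Fin k) : ℕ :=
  r j - if _h : (j : ℕ) = 0 then 0 else
    r ⟨(j : ℕ) - 1, Nat.lt_of_le_of_lt (Nat.sub_le _ _) j.isLt⟩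

@[simp] lemma cumGap_zero (g : Fin k → ℕ) : cumGap g 0 = 0 := by simp [cumGap]

lemma cumGap_succ (g : Fin k → ℕ) (j : Fin k) : cumGap g (j + 1) = cumGap g j + g j := by
  simp [cumGap, sum_range_succ]

lemma cumGap_strictMono {g : Fin k → ℕ} (hg : ∀ j, 1 ≤ g j) : StrictMono (cumGap g) := by
  refine strictMono_nat_of_lt_succ fun m => ?_
  have : 0 < if h : m < k then g ⟨m, h⟩ else 1 := by split <;> simp [hg, Nat.lt_of_succ_le]
  simpa [cumGap, sum_range_succ] using this

lemma gaps_cumGap (g : Fin k → ℕ) : gaps (fun j => cumGap g (j + 1)) = g := by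
  funext j
  rcases j with ⟨_ | j, hj⟩
  · simpa [gaps] using cumGap_succ g ⟨0, hj⟩
  · simp [gaps, cumGap_succ _ ⟨j + 1, hj⟩]

lemma cumGap_gaps {r : Fin k → ℕ} (hr : Monotone r) (j : Fin k) :
    cumGap (gaps r) (j + 1) = r j := by
  rcases j with ⟨j, hj⟩
  induction j with
  | zero => simpa [gaps] using cumGap_succ (gaps r) ⟨0, hj⟩
  | succ j ih =>
    have hle : r ⟨j, by omega⟩ ≤ r ⟨j + 1, hj⟩ := hr (Fin.mk_le_mk.mpr j.le_succ)
    rw [cumGap_succ _ ⟨j + 1, hj⟩, ih (by omega)]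
    simp only [gaps, Nat.add_one_ne_zero, dite_false, Nat.add_sub_cancel]
    omega

lemma gaps_eq_iff {r g : Fin k → ℕ} (hr : Monotone r) :
    gaps r = g ↔ ∀ j, r j = cumGap g (j + 1) := by
  refine ⟨fun h j => h ▸ (cumGap_gaps hr j).symm, fun h => ?_⟩
  rw [show r = fun j : Fin k => cumGap g (j + 1) from funext h, gaps_cumGap]

lemma one_le_gaps {r : Fin k → ℕ} (hr : StrictMono r) (hr1 : ∀ j, 1 ≤ r j) (j : Fin k) :
    1 ≤ gaps r j := by
  rcases j with ⟨_ | j, hj⟩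
  · simpa [gaps] using hr1 _
  · have : r ⟨j, by omega⟩ < r ⟨j + 1, hj⟩ := hr (Fin.mk_lt_mk.mpr j.lt_succ_self)
    simp only [gaps, Nat.add_one_ne_zero, dite_false, Nat.add_sub_cancel]
    omega

end Gaps

section Allowed

variable {Ω α : Type*} {k : ℕ}

/-- `sInf ∅ = 0`, so `hitTime X a ω = 0` exactly when `a` is never hit. -/
noncomputable def hitTime (X : ℕ → Ω → α) (a : α) (ω : Ω) : ℕ :=
  sInf {t | 1 ≤ t ∧ X t ω = a}

/-- The values `X t` may take if each `a j` is first hit at time `r j`. -/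
def allowed (a : Fin k → α) (r : Fin k → ℕ) (t : ℕ) : Set α :=
  {x | ∀ j, (x = a j → r j ≤ t) ∧ (t = r j → x = a j)}

lemma hitTime_eq_iff {X : ℕ → Ω → α} {a : Fin k → α} {r : Fin k → ℕ} {T : ℕ}
    (hr : ∀ j, 1 ≤ r j ∧ r j ≤ T) (ω : Ω) :
    (∀ j, hitTime X (a j) ω = r j) ↔ ∀ t ∈ Icc 1 T, X t ω ∈ allowed a r t := by
  constructor
  · intro h t ht j
    refine ⟨fun hx => h j ▸ Nat.sInf_le ⟨(mem_Icc.mp ht).1, hx⟩, fun htj => ?_⟩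
    have hne : {t | 1 ≤ t ∧ X t ω = a j}.Nonempty := by
      by_contra hemp
      have := h j
      rw [hitTime, Set.not_nonempty_iff_eq_empty.mp hemp, Nat.sInf_empty] at this
      exact absurd (hr j).1 (by omega)
    have hmem := Nat.sInf_mem hne
    rw [← hitTime, h j, ← htj] at hmem
    exact hmem.2
  · intro h j
    have hhit : X (r j) ω = a j := (h _ (mem_Icc.mpr (hr j)) j).2 rfl
    refine le_antisymm (Nat.sInf_le ⟨(hr j).1, hhit⟩) (le_csInf ⟨_, (hr j).1, hhit⟩ ?_)
    rintro t ⟨ht1, htX⟩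
    by_contra! hlt
    exact absurd ((h t (mem_Icc.mpr ⟨ht1, by have := (hr j).2; omega⟩) j).1 htX) (by omega)

lemma allowed_apply_self {a : Fin k → α} {r : Fin k → ℕ} (ha : Function.Injective a)
    (hr : Function.Injective r) (j : Fin k) : allowed a r (r j) = {a j} := by
  ext x
  refine ⟨fun hx => (hx j).2 rfl, ?_⟩
  rintro rfl i
  exact ⟨fun h => ha h ▸ le_rfl, fun h => hr h ▸ rfl⟩

lemma allowed_of_forall_ne [DecidableEq α] {a : Fin k → α} {r : Fin k → ℕ} {t : ℕ}
    (ht : ∀ j, t ≠ r j) :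
    allowed a r t = (({j | t < r j} : Finset (Fin k)).image a : Set α)ᶜ := by
  ext x
  simp [allowed, ht, eq_comm, imp_not_comm]

variable {g : Fin k → ℕ} (hg : ∀ j, 1 ≤ g j)
include hg

lemma allowed_cumGap_succ {a : Fin k → α} (ha : Function.Injective a) (j : Fin k) :
    allowed a (fun i => cumGap g (i + 1)) (cumGap g (j + 1)) = {a j} :=
  allowed_apply_self ha
    (fun _ _ h => Fin.ext (by simpa using (cumGap_strictMono hg).injective h)) j

lemma allowed_cumGap_of_mem_Ioo [DecidableEq α] (a : Fin k → α) {j : Fin k} {t : ℕ}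
    (ht : t ∈ Ioo (cumGap g j) (cumGap g (j + 1))) :
    allowed a (fun i => cumGap g (i + 1)) t = ((Ici j).image a : Set α)ᶜ := by
  have hc := cumGap_strictMono hg
  obtain ⟨hjt, htj⟩ := mem_Ioo.mp ht
  have hlt_iff : ∀ i : Fin k, t < cumGap g (i + 1) ↔ j ≤ i := fun i => by
    constructor
    · intro h
      by_contra! hij
      exact absurd (hc.monotone (show (i : ℕ) + 1 ≤ j from hij)) (by omega)
    · intro hij
      exact htj.trans_le (hc.monotone (by simpa using hij))
  rw [allowed_of_forall_ne fun i h => ?_]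
  · congr 3
    ext i
    simp [hlt_iff]
  · rcases lt_or_ge i j with hij | hij
    · exact absurd (hc.monotone (show (i : ℕ) + 1 ≤ j from hij)) (by omega)
    · exact absurd ((hlt_iff i).mpr hij) (by omega)

lemma setOf_hitTime_eq_cumGap (X : ℕ → Ω → α) (a : Fin k → α) :
    {ω | ∀ j, hitTime X (a j) ω = cumGap g (j + 1)} =
      ⋂ t ∈ Icc 1 (cumGap g k), X t ⁻¹' allowed a (fun i => cumGap g (i + 1)) t := by
  have hc := cumGap_strictMono hg
  ext ω
  simpa using hitTime_eq_iff (fun j => ⟨Nat.one_le_of_lt (hc (Nat.succ_pos j)),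
    hc.monotone (show (j : ℕ) + 1 ≤ k from j.isLt)⟩) ω

end Allowed

section Cylinder

variable {Ω : Type*} [MeasurableSpace Ω] {μ : Measure Ω} {N k : ℕ}

lemma measure_preimage_finset {Y : Ω → Fin N} (hYm : Measurable Y)
    (hY : ∀ a, μ {ω | Y ω = a} = 1 / N) (S : Finset (Fin N)) : μ (Y ⁻¹' S) = #S / N := by
  rw [← sum_measure_preimage_singleton S fun a _ => hYm (measurableSet_singleton a)]
  simp_rw [Set.preimage, Set.mem_singleton_iff, hY, sum_const, nsmul_eq_mul, mul_one_div]

lemma measure_preimage_compl_finset [IsProbabilityMeasure μ] {Y : Ω → Fin N}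
    (hYm : Measurable Y) (hY : ∀ a, μ {ω | Y ω = a} = 1 / N) (S : Finset (Fin N)) :
    μ (Y ⁻¹' (S : Set (Fin N))ᶜ) = 1 - #S / N := by
  rw [Set.preimage_compl, prob_compl_eq_one_sub (hYm S.measurableSet),
    measure_preimage_finset hYm hY]

variable {g : Fin k → ℕ} (hg : ∀ j, 1 ≤ g j)
  {X : ℕ → Ω → Fin N} (hmeas : ∀ t, Measurable (X t))
include hg hmeas

lemma measurableSet_hitTime_eq_cumGap (a : Fin k → Fin N) :
    MeasurableSet {ω | ∀ j, hitTime X (a j) ω = cumGap g (j + 1)} := by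
  rw [setOf_hitTime_eq_cumGap hg]
  exact Finset.measurableSet_biInter _ fun t _ => hmeas t .of_discrete

variable [IsProbabilityMeasure μ] (hunif : ∀ t a, μ {ω | X t ω = a} = 1 / N)
  {a : Fin k → Fin N} (ha : Function.Injective a)
include hunif ha

lemma prod_measure_allowed_window (j : Fin k) :
    ∏ t ∈ Ioc (cumGap g j) (cumGap g (j + 1)),
        μ (X t ⁻¹' allowed a (fun i => cumGap g (i + 1)) t) =
      (1 / N : ℝ≥0∞) * (1 - ((k - j : ℕ) : ℝ≥0∞) / N) ^ (g j - 1) := by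
  classical
  have hlt : cumGap g j < cumGap g (j + 1) := cumGap_strictMono hg (Nat.lt_succ_self _)
  rw [← Ioo_insert_right hlt, prod_insert right_notMem_Ioo,
    allowed_cumGap_succ hg ha, show μ (X _ ⁻¹' {a j}) = 1 / N from hunif _ _,
    prod_congr rfl fun t ht => by
      rw [allowed_cumGap_of_mem_Ioo hg a ht, measure_preimage_compl_finset (hmeas t) (hunif t),
        card_image_of_injective _ ha, Fin.card_Ici],
    prod_const, Nat.card_Ioo, cumGap_succ, Nat.add_sub_cancel_left, mul_comm]

theorem measure_hitTime_eq_cumGap (hindep : iIndepFun X μ) :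
    μ {ω | ∀ j, hitTime X (a j) ω = cumGap g (j + 1)} =
      ∏ j : Fin k, (1 / N : ℝ≥0∞) * (1 - ((k - j : ℕ) : ℝ≥0∞) / N) ^ (g j - 1) := by
  have hIcc : Icc 1 (cumGap g k) = Ioc (cumGap g 0) (cumGap g k) := by rw [cumGap_zero]; rfl
  rw [setOf_hitTime_eq_cumGap hg, hindep.measure_inter_preimage_eq_mul _ fun _ _ => .of_discrete,
    hIcc, prod_Ioc_eq_prod_range_prod_Ioc _ (cumGap_strictMono hg).monotone,
    ← Fin.prod_univ_eq_prod_range (fun m => ∏ t ∈ Ioc (cumGap g m) (cumGap g (m + 1)), _)]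
  exact prod_congr rfl fun j _ => prod_measure_allowed_window hg hmeas hunif ha j

end Cylinder

section Ordering

variable {k : ℕ} {f : Fin k → ℕ} {σ τ : Equiv.Perm (Fin k)}

lemma perm_eq_and_gaps_eq_iff (hτ : StrictMono (f ∘ τ)) {g : Fin k → ℕ}
    (hg : ∀ j, 1 ≤ g j) :
    (τ = σ ∧ gaps (f ∘ τ) = g) ↔ ∀ j, f (σ j) = cumGap g (j + 1) := by
  refine ⟨fun ⟨hτσ, hgaps⟩ => hτσ ▸ (gaps_eq_iff hτ.monotone).mp hgaps, fun h => ?_⟩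
  have hσ : StrictMono (f ∘ σ) := fun i j hij => by
    simpa only [Function.comp_apply, h] using cumGap_strictMono hg (Nat.succ_lt_succ hij)
  obtain rfl := Tuple.perm_eq_of_strictMono hτ hσ
  exact ⟨rfl, (gaps_eq_iff hτ.monotone).mpr h⟩

lemma perm_eq_iff_exists_cumGap (hτ : StrictMono (f ∘ τ)) (hf : ∀ i, 1 ≤ f i) :
    τ = σ ↔ ∃ h : Fin k → ℕ, ∀ j, f (σ j) = cumGap (h + 1) (j + 1) := by
  refine ⟨fun hτσ => ⟨gaps (f ∘ τ) - 1, ?_⟩, fun ⟨h, hh⟩ => ?_⟩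
  · have hg := one_le_gaps hτ fun j => hf (τ j)
    have hsub : gaps (f ∘ τ) - 1 + 1 = gaps (f ∘ τ) :=
      funext fun j => Nat.sub_add_cancel (hg j)
    rw [hsub]
    exact (perm_eq_and_gaps_eq_iff hτ hg).mp ⟨hτσ, rfl⟩
  · exact ((perm_eq_and_gaps_eq_iff hτ fun j => Nat.le_add_left 1 (h j)).mpr hh).1

end Ordering

section Main

variable {Ω : Type*} [MeasurableSpace Ω] {μ : Measure Ω} [IsProbabilityMeasure μ] {N k : ℕ}
  {X : ℕ → Ω → Fin N} (hmeas : ∀ t, Measurable (X t)) (hindep : iIndepFun X μ)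
  (hunif : ∀ t a, μ {ω | X t ω = a} = 1 / N)
include hmeas hindep hunif

lemma ae_one_le_hitTime : ∀ᵐ ω ∂μ, ∀ a, 1 ≤ hitTime X a ω := by
  refine ae_all_iff.mpr fun a => ae_iff.mpr (le_antisymm ?_ zero_le)
  have hbound : ∀ n, μ {ω | ¬1 ≤ hitTime X a ω} ≤ (1 - 1 / N) ^ n := by
    intro n
    have hsub : {ω | ¬1 ≤ hitTime X a ω} ⊆
        ⋂ t ∈ Icc 1 n, X t ⁻¹' (({a} : Finset (Fin N)) : Set (Fin N))ᶜ := by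
      intro ω hω
      simp only [Set.mem_iInter, mem_Icc]
      intro t ht hXt
      exact hω (Nat.sInf_mem (s := {t | 1 ≤ t ∧ X t ω = a})
        ⟨t, ht.1, by simpa using hXt⟩).1
    refine (measure_mono hsub).trans_eq ?_
    rw [hindep.measure_inter_preimage_eq_mul _ fun _ _ => .of_discrete,
      prod_congr rfl fun t _ => measure_preimage_compl_finset (hmeas t) (hunif t) _, prod_const,
      Nat.card_Icc, Nat.add_sub_cancel, card_singleton, Nat.cast_one]
  have hlt : (1 : ℝ≥0∞) - 1 / N < 1 :=
    ENNReal.sub_lt_self ENNReal.one_ne_top one_ne_zero (by simp)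
  exact ge_of_tendsto' (ENNReal.tendsto_pow_atTop_nhds_zero_of_lt_one hlt) hbound

theorem measure_perm_eq {b : Fin k → Fin N} (hb : Function.Injective b)
    {τ : Ω → Equiv.Perm (Fin k)}
    (hτ : ∀ᵐ ω ∂μ, StrictMono fun j => hitTime X (b (τ ω j)) ω)
    (σ : Equiv.Perm (Fin k)) :
    μ {ω | τ ω = σ} =
      ∏ j : Fin k, (1 / N : ℝ≥0∞) * (((k - j : ℕ) : ℝ≥0∞) / N)⁻¹ := by
  set E : (Fin k → ℕ) → Set Ω :=
    fun h => {ω | ∀ j, hitTime X (b (σ j)) ω = cumGap (h + 1) (j + 1)}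
  have hae : {ω | τ ω = σ} =ᵐ[μ] ⋃ h, E h := by
    rw [Filter.eventuallyEq_set]
    filter_upwards [hτ, ae_one_le_hitTime hmeas hindep hunif] with ω hmono hpos
    simp only [Set.mem_ofPred_eq, Set.mem_iUnion, E]
    exact perm_eq_iff_exists_cumGap (f := fun i => hitTime X (b i) ω) hmono (hpos <| b ·)
  have hdisj : Pairwise (Function.onFun Disjoint E) := fun h h' hne =>
    Set.disjoint_left.mpr fun ω hω hω' => hne <| add_right_cancel <| by
      rw [← gaps_cumGap (h + 1), ← gaps_cumGap (h' + 1)]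
      exact congrArg gaps (funext fun j => (hω j).symm.trans (hω' j))
  have hE (h : Fin k → ℕ) :
      μ (E h) =
        ∏ j : Fin k, (1 / N : ℝ≥0∞) * (1 - ((k - j : ℕ) : ℝ≥0∞) / N) ^ h j :=
    (measure_hitTime_eq_cumGap (g := h + 1) (fun j => Nat.le_add_left 1 (h j)) hmeas hunif
      (hb.comp σ.injective) hindep).trans
      (by simp only [Pi.add_apply, Pi.one_apply, Nat.add_sub_cancel])
  have hkN : k ≤ N := by simpa using Fintype.card_le_of_injective b hb
  rw [measure_congr hae, measure_iUnion hdisj fun h => measurableSet_hitTime_eq_cumGap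
      (g := h + 1) (fun j => Nat.le_add_left 1 (h j)) hmeas _, tsum_congr hE,
    ENNReal.tsum_pi_prod fun j m =>
      (1 / N : ℝ≥0∞) * (1 - ((k - j : ℕ) : ℝ≥0∞) / N) ^ m]
  refine prod_congr rfl fun j _ => ?_
  rw [ENNReal.tsum_mul_left, ENNReal.tsum_geometric, ENNReal.sub_sub_cancel ENNReal.one_ne_top]
  exact ENNReal.div_le_of_le_mul (by rw [one_mul]; exact_mod_cast (Nat.sub_le k j).trans hkN)

end Main

end HittingTimeGaps

open HittingTimeGaps in
theorem hitting_time_gaps_geometric_general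
    {Ω : Type*} [MeasurableSpace Ω] (μ : Measure Ω) [IsProbabilityMeasure μ]
    (N k : ℕ)
    (X : ℕ → Ω → Fin N)
    (hmeas : ∀ i, Measurable (X i))
    (hindep : iIndepFun X μ)
    (hunif : ∀ i (a : Fin N), μ {ω | X i ω = a} = 1 / N)
    (b : Fin k → Fin N) (hb : Function.Injective b)
    (R : Fin k → Ω → ℕ)
    (hR : ∀ j ω, R j ω = sInf {t | 1 ≤ t ∧ X t ω = b j})
    (τ : Ω → Equiv.Perm (Fin k))
    (hτ : ∀ᵐ ω ∂μ, StrictMono (fun j => R (τ ω j) ω)) :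
    ∀ σ : Equiv.Perm (Fin k), ∀ g : Fin k → ℕ, (∀ j, 1 ≤ g j) →
      μ {ω | τ ω = σ ∧ ∀ j : Fin k,
          R (τ ω j) ω - (if h : (j : ℕ) = 0 then 0 else
            R (τ ω ⟨(j : ℕ) - 1, Nat.lt_of_le_of_lt (Nat.sub_le _ _) j.isLt⟩) ω) = g j} =
      μ {ω | τ ω = σ} *
        ∏ j : Fin k, (((k - (j : ℕ) : ℕ) : ENNReal) / N) *
          (1 - ((k - (j : ℕ) : ℕ) : ENNReal) / N) ^ (g j - 1) := by
  intro σ g hg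
  obtain rfl : R = fun j ω => hitTime X (b j) ω := funext fun j => funext (hR j)
  have hgaps :
      {ω | τ ω = σ ∧ ∀ j, gaps (fun i => hitTime X (b (τ ω i)) ω) j = g j} =ᵐ[μ]
      {ω | ∀ j, hitTime X (b (σ j)) ω = cumGap g (j + 1)} := by
    rw [Filter.eventuallyEq_set]
    filter_upwards [hτ] with ω hmono
    exact (and_congr_right fun _ => funext_iff).symm.trans
      (perm_eq_and_gaps_eq_iff (f := fun i => hitTime X (b i) ω) hmono hg)
  refine (measure_congr hgaps).trans ?_
  rw [measure_hitTime_eq_cumGap (a := fun j => b (σ j)) hg hmeas hunif (hb.comp σ.injective)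
      hindep, measure_perm_eq hmeas hindep hunif hb hτ, ← prod_mul_distrib]
  refine prod_congr rfl fun j _ => ?_
  have hp0 : ((k - j : ℕ) : ℝ≥0∞) / N ≠ 0 :=
    ENNReal.div_ne_zero.mpr
      ⟨by exact_mod_cast (Nat.sub_pos_of_lt j.isLt).ne', ENNReal.natCast_ne_top N⟩
  have hptop : ((k - j : ℕ) : ℝ≥0∞) / N ≠ ⊤ :=
    ENNReal.div_ne_top (ENNReal.natCast_ne_top _) (by exact_mod_cast (b j).pos.ne')
  rw [mul_assoc, ENNReal.inv_mul_cancel_left hp0 hptop]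

/-- For i.i.d. uniform draws on an alphabet of size `N`, distinct targets
`b 0, …, b (k−1)`, hitting times `R j = min{t ≥ 1 : X t = b j}`, and `τ ω` the
permutation ordering the hitting times, conditional on the ordering `τ = σ`, the
gaps `R_{τ(0)}, R_{τ(1)} − R_{τ(0)}, …` are independent with the `j`-th (0-based)
gap geometric of parameter `(k − j)/N`. -/
theorem hitting_time_gaps_geometric
    {Ω : Type*} [MeasurableSpace Ω] (μ : Measure Ω) [IsProbabilityMeasure μ]
    (N k : ℕ) (hN : 0 < N) (hk : 0 < k) (hkN : k ≤ N)
    (X : ℕ → Ω → Fin N)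
    (hmeas : ∀ i, Measurable (X i))
    (hindep : iIndepFun X μ)
    (hunif : ∀ i (a : Fin N), μ {ω | X i ω = a} = 1 / N)
    (b : Fin k → Fin N) (hb : Function.Injective b)
    (R : Fin k → Ω → ℕ)
    (hR : ∀ j ω, R j ω = sInf {t | 1 ≤ t ∧ X t ω = b j})
    (τ : Ω → Equiv.Perm (Fin k))
    (hτ : ∀ᵐ ω ∂μ, StrictMono (fun j => R (τ ω j) ω)) :
    ∀ σ : Equiv.Perm (Fin k), ∀ g : Fin k → ℕ, (∀ j, 1 ≤ g j) →
      μ {ω | τ ω = σ ∧ ∀ j : Fin k,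
          R (τ ω j) ω - (if h : (j : ℕ) = 0 then 0 else
            R (τ ω ⟨(j : ℕ) - 1, Nat.lt_of_le_of_lt (Nat.sub_le _ _) j.isLt⟩) ω) = g j} =
      μ {ω | τ ω = σ} *
        ∏ j : Fin k, (((k - (j : ℕ) : ℕ) : ENNReal) / N) *
          (1 - ((k - (j : ℕ) : ℕ) : ENNReal) / N) ^ (g j - 1) :=
  hitting_time_gaps_geometric_general μ N k X hmeas hindep hunif b hb R hR τ hτ
end

section
/- A uniformly random permutation σ of {1, …, n}, viewed as the random vector (σ(1), …, σ(n)), is negatively associated: for any disjoint subsets A₁, A₂ of {1,…,n} and coordinatewise increasing functions f₁, f₂, E[f₁(σ(i): i∈A₁) f₂(σ(j): j∈A₂)] ≤ E[f₁(σ(i): i∈A₁)] · E[f₂(σ(j): j∈A₂)]. -/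
open Finset

/-- Chebyshev-type step: if `u` is constant `cu` off `A₁` and `≥ cu` on `A₁`,
similarly `v` with disjoint `A₂`, then `N·∑ uv ≤ (∑u)(∑v)`. -/
lemma NA_cheb {P : Type} [Fintype P] (A₁ A₂ : Set P) (hd : Disjoint A₁ A₂)
    (u v : P → ℝ) (cu cv : ℝ)
    (hu1 : ∀ p, p ∉ A₁ → u p = cu) (hu2 : ∀ p, p ∈ A₁ → cu ≤ u p)
    (hv1 : ∀ p, p ∉ A₂ → v p = cv) (hv2 : ∀ p, p ∈ A₂ → cv ≤ v p) :
    (Fintype.card P : ℝ) * ∑ p, u p * v p ≤ (∑ p, u p) * (∑ p, v p) := by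
  classical
  set u' : P → ℝ := fun p => u p - cu with hu'
  set v' : P → ℝ := fun p => v p - cv with hv'
  have hu'nn : ∀ p, 0 ≤ u' p := by
    intro p
    by_cases hp : p ∈ A₁
    · simpa [u'] using hu2 p hp
    · simp [u', hu1 p hp]
  have hv'nn : ∀ p, 0 ≤ v' p := by
    intro p
    by_cases hp : p ∈ A₂
    · simpa [v'] using hv2 p hp
    · simp [v', hv1 p hp]
  have hzero : ∀ p, u' p * v' p = 0 := by
    intro p
    by_cases hp : p ∈ A₁
    · have : p ∉ A₂ := fun h => (Set.disjoint_left.mp hd hp) h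
      simp [v', hv1 p this]
    · simp [u', hu1 p hp]
  have hsum_u : ∑ p, u p = (Fintype.card P : ℝ) * cu + ∑ p, u' p := by
    simp [u', Finset.sum_sub_distrib, Finset.card_univ, mul_comm]
  have hsum_v : ∑ p, v p = (Fintype.card P : ℝ) * cv + ∑ p, v' p := by
    simp [v', Finset.sum_sub_distrib, Finset.card_univ, mul_comm]
  have hsum_uv : ∑ p, u p * v p
      = (Fintype.card P : ℝ) * (cu * cv) + cu * ∑ p, v' p + cv * ∑ p, u' p := by
    have : ∀ p, u p * v p = cu * cv + cu * v' p + cv * u' p := by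
      intro p
      have h1 : u p = cu + u' p := by simp [u']
      have h2 : v p = cv + v' p := by simp [v']
      rw [h1, h2]
      linear_combination hzero p
    rw [Finset.sum_congr rfl fun p _ => this p]
    simp [Finset.sum_add_distrib, Finset.mul_sum, Finset.card_univ, mul_comm]
  have hU : 0 ≤ ∑ p, u' p := Finset.sum_nonneg fun p _ => hu'nn p
  have hV : 0 ≤ ∑ p, v' p := Finset.sum_nonneg fun p _ => hv'nn p
  rw [hsum_u, hsum_v, hsum_uv]
  nlinarith [mul_nonneg hU hV]

/-- Extend a bijection on complements of points to a full bijection. -/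
def NA_extEq {P V : Type} [DecidableEq P] [DecidableEq V] (p : P) (v : V)
    (τ : {x : P // x ≠ p} ≃ {w : V // w ≠ v}) : P ≃ V where
  toFun x := if h : x = p then v else τ ⟨x, h⟩
  invFun w := if h : w = v then p else τ.symm ⟨w, h⟩
  left_inv x := by
    by_cases h : x = p
    · simp [h]
    · simp only [dif_neg h]
      rw [dif_neg (τ ⟨x, h⟩).2]
      simp
  right_inv w := by
    by_cases h : w = v
    · simp [h]
    · simp only [dif_neg h]
      rw [dif_neg (τ.symm ⟨w, h⟩).2]
      simp
/-- Main induction: for a uniformly random bijection `σ : P ≃ V` between finite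
types of cardinality `m` (with `V` linearly ordered), monotone functions of the
values on disjoint coordinate sets are negatively correlated. -/
theorem NA_key : ∀ (m : ℕ) (P V : Type) [Fintype P] [DecidableEq P] [Fintype V]
    [DecidableEq V] [LinearOrder V], Fintype.card P = m → Fintype.card V = m →
    ∀ (A₁ A₂ : Set P), Disjoint A₁ A₂ →
    ∀ (f g : (P → V) → ℝ), Monotone f → Monotone g →
    (∀ s t : P → V, (∀ i ∈ A₁, s i = t i) → f s = f t) →
    (∀ s t : P → V, (∀ i ∈ A₂, s i = t i) → g s = g t) →
    (m.factorial : ℝ) * (∑ σ : P ≃ V, f σ * g σ) ≤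
      (∑ σ : P ≃ V, f σ) * ∑ σ : P ≃ V, g σ := by
  intro m
  induction m with
  | zero =>
    intro P V _ _ _ _ _ hP hV A₁ A₂ hd f g hfm hgm hfd hgd
    haveI : IsEmpty P := Fintype.card_eq_zero_iff.mp hP
    haveI : IsEmpty V := Fintype.card_eq_zero_iff.mp hV
    haveI : Subsingleton (P ≃ V) :=
      ⟨fun a b => by ext x; exact (IsEmpty.false x).elim⟩
    have σ₀ : P ≃ V := Equiv.equivOfIsEmpty P V
    have hsum : ∀ (h : (P → V) → ℝ), ∑ σ : P ≃ V, h σ = h σ₀ :=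
      fun h => Fintype.sum_subsingleton _ σ₀
    rw [show (∑ σ : P ≃ V, f ⇑σ * g ⇑σ) = f ⇑σ₀ * g ⇑σ₀ from
      Fintype.sum_subsingleton _ σ₀, hsum f, hsum g]
    simp
  | succ m ih =>
    intro P V _ _ _ _ _ hP hV A₁ A₂ hd f g hfm hgm hfd hgd
    classical
    -- ####### SUCC BODY #######
    have hcard : Fintype.card P = Fintype.card V := by rw [hP, hV]
    have hcardE : Fintype.card (P ≃ V) = (m + 1).factorial := by
      rw [Fintype.card_equiv (Fintype.equivOfCardEq hcard), hP]
    -- degenerate case: the second function is constant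
    have hconst : ∀ (f g : (P → V) → ℝ), (∀ s t : P → V, g s = g t) →
        ((m+1).factorial : ℝ) * (∑ σ : P ≃ V, f ⇑σ * g ⇑σ)
          = (∑ σ : P ≃ V, f ⇑σ) * ∑ σ : P ≃ V, g ⇑σ := by
      intro f g hg
      have σ₀ : P ≃ V := Fintype.equivOfCardEq hcard
      have h1 : ∀ σ : P ≃ V, g ⇑σ = g ⇑σ₀ := fun σ => hg _ _
      calc ((m+1).factorial : ℝ) * ∑ σ : P ≃ V, f ⇑σ * g ⇑σ
          = ((m+1).factorial : ℝ) * ((∑ σ : P ≃ V, f ⇑σ) * g ⇑σ₀) := by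
            rw [Finset.sum_mul]
            congr 1
            exact Finset.sum_congr rfl fun σ _ => by rw [h1 σ]
        _ = (∑ σ : P ≃ V, f ⇑σ) * ∑ σ : P ≃ V, g ⇑σ := by
            rw [Finset.sum_congr rfl fun σ _ => h1 σ, Finset.sum_const,
              Finset.card_univ, hcardE]
            ring
    by_cases hA₂ : A₂ = ∅
    · exact le_of_eq (hconst f g fun s t => hgd s t (by simp [hA₂]))
    by_cases hA₁ : A₁ = ∅
    · have h2 : (∑ σ : P ≃ V, g ⇑σ * f ⇑σ) = ∑ σ : P ≃ V, f ⇑σ * g ⇑σ :=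
        Finset.sum_congr rfl fun σ _ => mul_comm _ _
      have := hconst g f fun s t => hfd s t (by simp [hA₁])
      exact le_of_eq (by rw [← h2, this, mul_comm])
    obtain ⟨q₁, hq₁⟩ := Set.nonempty_iff_ne_empty.mpr hA₁
    obtain ⟨q₂, hq₂⟩ := Set.nonempty_iff_ne_empty.mpr hA₂
    haveI : Nonempty V := Fintype.card_pos_iff.mp (hV ▸ Nat.succ_pos m)
    set vstar := (Finset.univ : Finset V).max' Finset.univ_nonempty with hvstar
    have hvmax : ∀ w : V, w ≤ vstar := fun w => Finset.le_max' _ _ (Finset.mem_univ w)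
    set Fib : P → Finset (P ≃ V) :=
      fun p => Finset.univ.filter (fun σ : P ≃ V => σ p = vstar) with hFib
    have mem_Fib : ∀ {p : P} {σ : P ≃ V}, σ ∈ Fib p ↔ σ p = vstar := by
      intro p σ
      simp [hFib]
    -- fiber decomposition
    have fiber_eq : ∀ (H : (P ≃ V) → ℝ),
        ∑ σ : P ≃ V, H σ = ∑ p : P, ∑ σ ∈ Fib p, H σ := by
      intro H
      rw [← Finset.sum_fiberwise Finset.univ (fun σ : P ≃ V => σ.symm vstar) H]
      refine Finset.sum_congr rfl fun p _ => Finset.sum_congr ?_ fun _ _ => rfl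
      ext σ
      simp only [hFib, Finset.mem_filter, Finset.mem_univ, true_and]
      constructor
      · intro h; rw [← h, Equiv.apply_symm_apply]
      · intro h; rw [← h, Equiv.symm_apply_apply]
    -- swapping lemma
    have hswap : ∀ (H : (P ≃ V) → ℝ) (p q : P),
        ∑ σ ∈ Fib q, H ((Equiv.swap p q).trans σ) = ∑ σ ∈ Fib p, H σ := by
      intro H p q
      refine Finset.sum_nbij (fun σ => (Equiv.swap p q).trans σ) ?_ ?_ ?_ fun _ _ => rfl
      · intro σ hσ
        rw [mem_Fib] at hσ ⊢
        simp [Equiv.swap_apply_left, hσ]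
      · intro σ₁ _ σ₂ _ h
        ext x
        have h' := congrArg (fun e : P ≃ V => e ((Equiv.swap p q) x)) h
        simpa [Equiv.swap_apply_self] using h'
      · intro σ hσ
        simp only [Finset.coe_filter, Set.mem_setOf_eq, Finset.mem_coe, mem_Fib] at hσ
        refine ⟨(Equiv.swap p q).trans σ,
          by rw [Finset.mem_coe, mem_Fib]; simp [Equiv.swap_apply_right, hσ], ?_⟩
        · ext x
          simp [Equiv.swap_apply_self]
    -- conditional inequality on each fiber, via the induction hypothesis
    have hcond : ∀ p : P,
        (m.factorial : ℝ) * ∑ σ ∈ Fib p, f ⇑σ * g ⇑σ ≤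
          (∑ σ ∈ Fib p, f ⇑σ) * ∑ σ ∈ Fib p, g ⇑σ := by
      intro p
      have hcP' : Fintype.card {x : P // x ≠ p} = m := by
        rw [Fintype.card_subtype_compl, Fintype.card_subtype_eq, hP]
        omega
      have hcV' : Fintype.card {w : V // w ≠ vstar} = m := by
        rw [Fintype.card_subtype_compl, Fintype.card_subtype_eq, hV]
        omega
      set F : ({x : P // x ≠ p} → {w : V // w ≠ vstar}) → ℝ :=
        fun t => f (fun x => if h : x = p then vstar else t ⟨x, h⟩) with hF
      set G : ({x : P // x ≠ p} → {w : V // w ≠ vstar}) → ℝ :=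
        fun t => g (fun x => if h : x = p then vstar else t ⟨x, h⟩) with hG
      have hFm : Monotone F := by
        intro t t' h
        apply hfm
        intro x
        by_cases hx : x = p
        · simp only [dif_pos hx]
          exact le_refl _
        · simp only [dif_neg hx]
          exact h _
      have hGm : Monotone G := by
        intro t t' h
        apply hgm
        intro x
        by_cases hx : x = p
        · simp only [dif_pos hx]
          exact le_refl _
        · simp only [dif_neg hx]
          exact h _
      have hFd : ∀ s t, (∀ i ∈ {x : {x : P // x ≠ p} | ↑x ∈ A₁}, s i = t i) →
          F s = F t := by
        intro s t h
        apply hfd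
        intro i hi
        by_cases hx : i = p
        · simp only [dif_pos hx]
        · simp only [dif_neg hx]
          exact congrArg _ (h ⟨i, hx⟩ hi)
      have hGd2 : ∀ s t, (∀ i ∈ {x : {x : P // x ≠ p} | ↑x ∈ A₂}, s i = t i) →
          G s = G t := by
        intro s t h
        apply hgd
        intro i hi
        by_cases hx : i = p
        · simp only [dif_pos hx]
        · simp only [dif_neg hx]
          exact congrArg _ (h ⟨i, hx⟩ hi)
      have hd' : Disjoint {x : {x : P // x ≠ p} | ↑x ∈ A₁}
          {x : {x : P // x ≠ p} | ↑x ∈ A₂} := by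
        rw [Set.disjoint_left]
        intro a ha1 ha2
        exact Set.disjoint_left.mp hd ha1 ha2
      have hIH := ih {x : P // x ≠ p} {w : V // w ≠ vstar} hcP' hcV' _ _ hd'
        F G hFm hGm hFd hGd2
      have hre : ∀ H : (P → V) → ℝ,
          ∑ τ : {x : P // x ≠ p} ≃ {w : V // w ≠ vstar}, H ⇑(NA_extEq p vstar τ)
            = ∑ σ ∈ Fib p, H ⇑σ := by
        intro H
        refine Finset.sum_nbij (fun τ => NA_extEq p vstar τ) ?_ ?_ ?_ fun _ _ => rfl
        · intro τ _
          rw [mem_Fib]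
          simp [NA_extEq]
        · intro τ₁ _ τ₂ _ h
          ext x
          have h' := congrArg (fun e : P ≃ V => e ↑x) h
          simp only [NA_extEq, Equiv.coe_fn_mk, dif_neg x.2] at h'
          simpa using h'
        · intro σ hσ
          simp only [Finset.mem_coe, mem_Fib] at hσ
          have hiff : ∀ x : P, x ≠ p ↔ σ x ≠ vstar := by
            intro x
            apply not_iff_not.mpr
            constructor
            · intro hx
              rw [hx, hσ]
            · intro hx
              exact σ.injective (hx.trans hσ.symm)
          refine ⟨σ.subtypeEquiv hiff, Finset.mem_coe.mpr (Finset.mem_univ _), ?_⟩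
          ext x
          by_cases hx : x = p
          · simp [NA_extEq, hx, hσ]
          · simp [NA_extEq, hx]
      calc (m.factorial : ℝ) * ∑ σ ∈ Fib p, f ⇑σ * g ⇑σ
          = (m.factorial : ℝ) *
              ∑ τ : {x : P // x ≠ p} ≃ {w : V // w ≠ vstar}, F ⇑τ * G ⇑τ := by
            exact congrArg (fun z => (m.factorial : ℝ) * z)
              (hre (fun s => f s * g s)).symm
        _ ≤ (∑ τ : {x : P // x ≠ p} ≃ {w : V // w ≠ vstar}, F ⇑τ) *
              ∑ τ : {x : P // x ≠ p} ≃ {w : V // w ≠ vstar}, G ⇑τ := hIH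
        _ = (∑ σ ∈ Fib p, f ⇑σ) * ∑ σ ∈ Fib p, g ⇑σ := by
            exact congrArg₂ (fun a b => a * b) (hre f) (hre g)
    -- constancy of the fiber sums off the support
    have hSconst : ∀ (f : (P → V) → ℝ) (A : Set P),
        (∀ s t, (∀ i ∈ A, s i = t i) → f s = f t) → ∀ p q, p ∉ A → q ∉ A →
        ∑ σ ∈ Fib p, f ⇑σ = ∑ σ ∈ Fib q, f ⇑σ := by
      intro f A hfdep p q hp hq
      rw [← hswap (fun σ => f ⇑σ) p q]
      refine Finset.sum_congr rfl fun σ _ => hfdep _ _ fun i hi => ?_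
      have h1 : i ≠ p := fun h => hp (h ▸ hi)
      have h2 : i ≠ q := fun h => hq (h ▸ hi)
      show σ ((Equiv.swap p q) i) = σ i
      rw [Equiv.swap_apply_of_ne_of_ne h1 h2]
    -- monotonicity of the fiber sums
    have hSmono : ∀ (f : (P → V) → ℝ) (A : Set P), Monotone f →
        (∀ s t, (∀ i ∈ A, s i = t i) → f s = f t) → ∀ p q, p ∈ A → q ∉ A →
        ∑ σ ∈ Fib q, f ⇑σ ≤ ∑ σ ∈ Fib p, f ⇑σ := by
      intro f A hmono hdep p q hp hq
      rw [← hswap (fun σ => f ⇑σ) p q]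
      refine Finset.sum_le_sum fun σ hσ => ?_
      rw [mem_Fib] at hσ
      have hpq : p ≠ q := fun h => hq (h ▸ hp)
      have heq : f ⇑σ = f (Function.update ⇑σ q (σ p)) := by
        apply hdep
        intro i hi
        have h2 : i ≠ q := fun h => hq (h ▸ hi)
        rw [Function.update_of_ne h2]
      rw [heq]
      apply hmono
      intro x
      by_cases hxp : x = p
      · rw [Function.update_of_ne (by rw [hxp]; exact hpq)]
        show σ x ≤ σ ((Equiv.swap p q) x)
        rw [hxp, Equiv.swap_apply_left, hσ]
        exact hvmax _
      · by_cases hxq : x = q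
        · rw [hxq, Function.update_self]
          show σ p ≤ σ ((Equiv.swap p q) q)
          rw [Equiv.swap_apply_right]
        · rw [Function.update_of_ne hxq]
          show σ x ≤ σ ((Equiv.swap p q) x)
          rw [Equiv.swap_apply_of_ne_of_ne hxp hxq]
    -- assemble everything
    have hq₂A₁ : q₂ ∉ A₁ := fun h => Set.disjoint_left.mp hd h hq₂
    have hq₁A₂ : q₁ ∉ A₂ := fun h => Set.disjoint_left.mp hd hq₁ h
    have hcheb := NA_cheb A₁ A₂ hd
      (fun p => ∑ σ ∈ Fib p, f ⇑σ) (fun p => ∑ σ ∈ Fib p, g ⇑σ)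
      (∑ σ ∈ Fib q₂, f ⇑σ) (∑ σ ∈ Fib q₁, g ⇑σ)
      (fun p hp => hSconst f A₁ hfd p q₂ hp hq₂A₁)
      (fun p hp => hSmono f A₁ hfm hfd p q₂ hp hq₂A₁)
      (fun p hp => hSconst g A₂ hgd p q₁ hp hq₁A₂)
      (fun p hp => hSmono g A₂ hgm hgd p q₁ hp hq₁A₂)
    rw [fiber_eq (fun σ => f ⇑σ * g ⇑σ), fiber_eq (fun σ => f ⇑σ),
      fiber_eq (fun σ => g ⇑σ)]
    have hstep : (m.factorial : ℝ) * ∑ p : P, ∑ σ ∈ Fib p, f ⇑σ * g ⇑σ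
        ≤ ∑ p : P, (∑ σ ∈ Fib p, f ⇑σ) * ∑ σ ∈ Fib p, g ⇑σ := by
      rw [Finset.mul_sum]
      exact Finset.sum_le_sum fun p _ => hcond p
    have hPcard : ((Fintype.card P : ℕ) : ℝ) = ((m + 1 : ℕ) : ℝ) := by rw [hP]
    calc ((m+1).factorial : ℝ) * ∑ p : P, ∑ σ ∈ Fib p, f ⇑σ * g ⇑σ
        = ((m+1 : ℕ) : ℝ) *
            ((m.factorial : ℝ) * ∑ p : P, ∑ σ ∈ Fib p, f ⇑σ * g ⇑σ) := by
          rw [Nat.factorial_succ]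
          push_cast
          ring
      _ ≤ ((m+1 : ℕ) : ℝ) *
            ∑ p : P, (∑ σ ∈ Fib p, f ⇑σ) * ∑ σ ∈ Fib p, g ⇑σ :=
          mul_le_mul_of_nonneg_left hstep (by positivity)
      _ = ((Fintype.card P : ℕ) : ℝ) *
            ∑ p : P, (∑ σ ∈ Fib p, f ⇑σ) * ∑ σ ∈ Fib p, g ⇑σ := by
          rw [hPcard]
      _ ≤ _ := hcheb


/-- A uniformly random permutation of `{1,…,n}`, viewed as the random vector
`(σ(1), …, σ(n))`, is negatively associated: for disjoint `A₁, A₂ ⊆ {1,…,n}` and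
coordinatewise increasing real-valued functions `f₁, f₂`,
`E[f₁(σ|A₁) f₂(σ|A₂)] ≤ E[f₁(σ|A₁)] E[f₂(σ|A₂)]`, expectations being averages
over the symmetric group. -/
theorem uniform_permutation_negAssoc (n : ℕ) (hn : 0 < n)
    (A₁ A₂ : Set (Fin n)) (hdisj : Disjoint A₁ A₂)
    (f₁ : (A₁ → Fin n) → ℝ) (f₂ : (A₂ → Fin n) → ℝ)
    (hf₁ : Monotone f₁) (hf₂ : Monotone f₂) :
    (∑ σ : Equiv.Perm (Fin n), f₁ (fun i => σ i) * f₂ (fun j => σ j)) /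
        (Nat.factorial n) ≤
      ((∑ σ : Equiv.Perm (Fin n), f₁ (fun i => σ i)) / (Nat.factorial n)) *
        ((∑ σ : Equiv.Perm (Fin n), f₂ (fun j => σ j)) / (Nat.factorial n)) := by
  classical
  have key := NA_key n (Fin n) (Fin n) (Fintype.card_fin n) (Fintype.card_fin n)
      A₁ A₂ hdisj
      (fun s => f₁ fun i => s i) (fun s => f₂ fun j => s j)
      (fun s t h => hf₁ fun i => h i)
      (fun s t h => hf₂ fun j => h j)
      (fun s t h => congrArg f₁ (funext fun i => h i i.2))
      (fun s t h => congrArg f₂ (funext fun j => h j j.2))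
  have key' : (Nat.factorial n : ℝ) *
      (∑ σ : Equiv.Perm (Fin n), f₁ (fun i => σ i) * f₂ (fun j => σ j)) ≤
      (∑ σ : Equiv.Perm (Fin n), f₁ (fun i => σ i)) *
        ∑ σ : Equiv.Perm (Fin n), f₂ (fun j => σ j) := key
  have hpos : (0:ℝ) < (Nat.factorial n : ℝ) := by positivity
  rw [div_mul_div_comm, div_le_div_iff₀ hpos (by positivity)]
  nlinarith [key', hpos]
end

section
/- (Hoeffding/Newman covariance identity) For real random variables U, V with suitable integrability, and continuously differentiable functions f, g with integrable derivatives, Cov(f(U), g(V)) = ∫∫ f'(u) g'(v) H_{U,V}(u,v) du dv, where H_{U,V}(u,v) = P(U ≥ u, V ≥ v) − P(U ≥ u)P(V ≥ v). -/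
/-!
After truncating `U` to `[a, b]` and `V` to `[c, d]`, the identity is Fubini's theorem: by the
fundamental theorem of calculus `f (max a (min b x)) - f a = ∫ u in Ioc a b, f' u * 1{u ≤ x}`, and
`H(u, v) = Cov(1{u ≤ U}, 1{v ≤ V})`, so the covariance of the truncated variables is the integral
of `f' g' H` over `Ioc a b ×ˢ Ioc c d`. The truncation is then removed, first in
`u`, then in `v`. On the integral side this is dominated convergence for any cut points. On the
covariance side it is not automatic, since `f b * P(U ≥ b)` need not tend to `0`. But for an
integrable weight `w ≥ 0` with `E[|f U| w] < ∞` there are always cut points `b → ∞` with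
`|f b| * E[w; U ≥ b] → 0`: otherwise `|f U| ≥ δ / E[w; U ≥ K]` on `{U ≥ K}`, and integrating over
`{U ≥ K}` contradicts `E[|f U| w; U ≥ K] → 0`.
-/

open MeasureTheory ProbabilityTheory Filter Set Topology

section Interval

variable {f f' : ℝ → ℝ}

theorem measurable_of_hasDerivAt (hf : ∀ x, HasDerivAt f (f' x) x) :
    Measurable f :=
  (continuous_iff_continuousAt.2 fun x => (hf x).continuousAt).measurable

theorem MeasureTheory.LocallyIntegrable.integrableOn_Ioc (hf' : LocallyIntegrable f') (a b : ℝ) :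
    IntegrableOn f' (Ioc a b) :=
  (hf'.integrableOn_isCompact isCompact_Icc).mono_set Ioc_subset_Icc_self

theorem setIntegral_Ioc_eq_sub_max (hf : ∀ x, HasDerivAt f (f' x) x) (hf' : LocallyIntegrable f')
    (a m : ℝ) : ∫ u in Ioc a m, f' u = f (max a m) - f a := by
  rcases le_total a m with h | h
  · rw [max_eq_right h, ← intervalIntegral.integral_of_le h]
    exact intervalIntegral.integral_eq_sub_of_hasDerivAt (fun x _ => hf x)
      ((intervalIntegrable_iff_integrableOn_Icc_of_le h).2
        (hf'.integrableOn_isCompact isCompact_Icc))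
  · simp [max_eq_left h, Ioc_eq_empty_of_le h]

theorem setIntegral_Ioc_inter_Iic (hf : ∀ x, HasDerivAt f (f' x) x) (hf' : LocallyIntegrable f')
    (a b x : ℝ) : ∫ u in Ioc a b ∩ Iic x, f' u = f (max a (min b x)) - f a := by
  rw [Ioc_inter_Iic]
  exact setIntegral_Ioc_eq_sub_max hf hf' a _

theorem abs_comp_max_min_sub_le_setIntegral_abs (hf : ∀ x, HasDerivAt f (f' x) x)
    (hf' : LocallyIntegrable f') (a b x : ℝ) :
    |f (max a (min b x)) - f a| ≤ ∫ u in Ioc a b, |f' u| := by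
  rw [← setIntegral_Ioc_inter_Iic hf hf']
  calc _ ≤ ∫ u in Ioc a b ∩ Iic x, |f' u| := abs_integral_le_integral_abs
    _ ≤ _ := setIntegral_mono_set (hf'.integrableOn_Ioc a b).abs
      (ae_of_all _ fun _ => abs_nonneg _) inter_subset_left.eventuallyLE

end Interval

theorem abs_comp_max_min_le (φ : ℝ → ℝ) (a b x : ℝ) :
    |φ (max a (min b x))| ≤ |φ a| + |φ b| + |φ x| := by
  have := abs_nonneg (φ a); have := abs_nonneg (φ b); have := abs_nonneg (φ x)
  rcases max_choice a (min b x) with h | h <;> rw [h]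
  · linarith
  · rcases min_choice b x with h' | h' <;> rw [h'] <;> linarith

theorem comp_max_min_sub (φ : ℝ → ℝ) {a b : ℝ} (hab : a ≤ b) (x : ℝ) :
    φ (max a (min b x)) - φ x = (φ (max a x) - φ x) + (φ (min b x) - φ x) := by
  rcases le_total x a with hxa | hax
  · simp [min_eq_right (hxa.trans hab), max_eq_left hxa]
  rcases le_total x b with hxb | hbx
  · simp [min_eq_right hxb, max_eq_right hax]
  · simp [min_eq_left hbx, max_eq_right hab, max_eq_right hax]

theorem abs_comp_min_sub_mul_le_indicator {Ω : Type*} {X : Ω → ℝ} {φ : ℝ → ℝ} {w : Ω → ℝ}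
    (hw0 : ∀ ω, 0 ≤ w ω) (b : ℝ) (ω : Ω) :
    |φ (min b (X ω)) - φ (X ω)| * w ω ≤
      {ω | b ≤ X ω}.indicator (fun ω => |φ b| * w ω + |φ (X ω)| * w ω) ω := by
  rcases le_or_gt b (X ω) with h | h
  · rw [indicator_of_mem (show ω ∈ {ω | b ≤ X ω} from h), min_eq_left h, ← add_mul]
    exact mul_le_mul_of_nonneg_right (abs_sub _ _) (hw0 ω)
  · rw [indicator_of_notMem (show ω ∉ {ω | b ≤ X ω} from not_le.2 h), min_eq_right h.le]
    simp

theorem tendsto_setIntegral_of_eventually_mem {α ι E : Type*} [MeasurableSpace α]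
    [NormedAddCommGroup E] [NormedSpace ℝ E] {μ : Measure α} {l : Filter ι}
    [l.IsCountablyGenerated] {s : ι → Set α} (hs : ∀ i, MeasurableSet (s i))
    (hmem : ∀ x, ∀ᶠ i in l, x ∈ s i) {F : α → E} (hF : Integrable F μ) :
    Tendsto (fun i => ∫ x in s i, F x ∂μ) l (𝓝 (∫ x, F x ∂μ)) := by
  simp_rw [← integral_indicator (hs _)]
  refine tendsto_integral_filter_of_dominated_convergence (fun x => ‖F x‖)
    (Eventually.of_forall fun i => hF.aestronglyMeasurable.indicator (hs i))
    (Eventually.of_forall fun i => ae_of_all _ fun x => norm_indicator_le_norm_self _ _) hF.norm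
    (ae_of_all _ fun x => ?_)
  exact tendsto_const_nhds.congr' ((hmem x).mono fun i hi => (indicator_of_mem hi F).symm)

theorem tendsto_setIntegral_preimage_Ioc {α E : Type*} [MeasurableSpace α]
    [NormedAddCommGroup E] [NormedSpace ℝ E] {μ : Measure α} {π : α → ℝ} (hπ : Measurable π)
    {F : α → E} (hF : Integrable F μ) {a b : ℕ → ℝ} (ha : Tendsto a atTop atBot)
    (hb : Tendsto b atTop atTop) :
    Tendsto (fun n => ∫ x in π ⁻¹' Ioc (a n) (b n), F x ∂μ) atTop (𝓝 (∫ x, F x ∂μ)) :=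
  tendsto_setIntegral_of_eventually_mem (fun _ => hπ measurableSet_Ioc)
    (fun x => (ha.eventually (eventually_lt_atBot (π x))).and
      (hb.eventually (eventually_ge_atTop (π x)))) hF

section Fubini

variable {α Ω : Type*} [MeasurableSpace α] [MeasurableSpace Ω] {ν : Measure α}
  {μ : Measure Ω} [IsFiniteMeasure μ]

theorem measurableSet_fst_le {π : α → ℝ} (hπ : Measurable π) {U : Ω → ℝ} (hU : Measurable U) :
    MeasurableSet {z : α × Ω | π z.1 ≤ U z.2} :=
  measurableSet_le (hπ.comp measurable_fst) (hU.comp measurable_snd)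

theorem MeasureTheory.IntegrableOn.mul_prod {β : Type*} [MeasurableSpace β] [SFinite ν]
    {ρ : Measure β} [SFinite ρ] {φ : α → ℝ} {ψ : β → ℝ} {s : Set α} {t : Set β}
    (hφ : IntegrableOn φ s ν) (hψ : IntegrableOn ψ t ρ) :
    IntegrableOn (fun p => φ p.1 * ψ p.2) (s ×ˢ t) (ν.prod ρ) := by
  rw [IntegrableOn, ← Measure.prod_restrict]
  exact Integrable.mul_prod hφ hψ

theorem MeasureTheory.Integrable.mul_measureReal_prodMk {φ : α → ℝ} (hφ : Integrable φ ν)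
    {S : Set (α × Ω)} (hS : MeasurableSet S) :
    Integrable (fun x => φ x * μ.real (Prod.mk x ⁻¹' S)) ν :=
  hφ.mul_bdd (measurable_measure_prodMk_left hS).ennreal_toReal.aestronglyMeasurable
    (ae_of_all _ fun _ => by
      rw [Real.norm_of_nonneg measureReal_nonneg]
      exact measureReal_mono (subset_univ _))

theorem integral_mul_measureReal_prodMk [SFinite ν] {φ : α → ℝ} (hφ : Integrable φ ν)
    {S : Set (α × Ω)} (hS : MeasurableSet S) :
    ∫ x, φ x * μ.real (Prod.mk x ⁻¹' S) ∂ν = ∫ ω, ∫ x in (·, ω) ⁻¹' S, φ x ∂ν ∂μ := by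
  have hint : Integrable (S.indicator fun z => φ z.1) (ν.prod μ) := (hφ.comp_fst μ).indicator hS
  calc ∫ x, φ x * μ.real (Prod.mk x ⁻¹' S) ∂ν
      = ∫ x, ∫ ω, S.indicator (fun z => φ z.1) (x, ω) ∂μ ∂ν := by
        congr 1; ext x
        change _ = ∫ ω, (Prod.mk x ⁻¹' S).indicator (fun _ => φ x) ω ∂μ
        rw [integral_indicator (measurable_prodMk_left hS), setIntegral_const, smul_eq_mul,
          mul_comm]
    _ = ∫ ω, ∫ x, S.indicator (fun z => φ z.1) (x, ω) ∂ν ∂μ := integral_integral_swap hint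
    _ = ∫ ω, ∫ x in (·, ω) ⁻¹' S, φ x ∂ν ∂μ := by
        congr 1; ext ω
        exact integral_indicator (measurable_prodMk_right hS)

end Fubini

section Rectangle

variable {Ω : Type*} [MeasurableSpace Ω] {μ : Measure Ω} {U V : Ω → ℝ} {f g f' g' : ℝ → ℝ}

noncomputable def hoeffdingKernel (μ : Measure Ω) (U V : Ω → ℝ) (u v : ℝ) : ℝ :=
  μ.real {ω | u ≤ U ω ∧ v ≤ V ω} - μ.real {ω | u ≤ U ω} * μ.real {ω | v ≤ V ω}

theorem covariance_eq_sub_of_integrable [IsProbabilityMeasure μ] {X Y : Ω → ℝ}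
    (hX : Integrable X μ) (hY : Integrable Y μ) (hXY : Integrable (fun ω => X ω * Y ω) μ) :
    cov[X, Y; μ] = ∫ ω, X ω * Y ω ∂μ - (∫ ω, X ω ∂μ) * ∫ ω, Y ω ∂μ := by
  simp_rw [covariance, sub_mul, mul_sub]
  repeat rw [integral_sub]
  · simp_rw [integral_mul_const, integral_const_mul, integral_const, probReal_univ, one_smul]
    ring
  · exact hY.const_mul _
  · exact integrable_const _
  · exact hXY
  · exact hX.mul_const _
  · exact hXY.sub (hX.mul_const _)
  · exact (hY.const_mul _).sub (integrable_const _)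

theorem integrable_comp_max_min_sub [IsFiniteMeasure μ] (hU : Measurable U)
    (hf : ∀ x, HasDerivAt f (f' x) x) (hf' : LocallyIntegrable f') (a b : ℝ) :
    Integrable (fun ω => f (max a (min b (U ω))) - f a) μ := by
  refine Integrable.of_bound ?_ _
    (ae_of_all _ fun ω => abs_comp_max_min_sub_le_setIntegral_abs hf hf' a b (U ω))
  exact (((measurable_of_hasDerivAt hf).comp (measurable_const.max (measurable_const.min hU))).sub
    measurable_const).aestronglyMeasurable

theorem integral_comp_max_min_sub [IsFiniteMeasure μ] (hU : Measurable U)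
    (hf : ∀ x, HasDerivAt f (f' x) x) (hf' : LocallyIntegrable f') (a b : ℝ) :
    ∫ ω, (f (max a (min b (U ω))) - f a) ∂μ = ∫ u in Ioc a b, f' u * μ.real {ω | u ≤ U ω} := by
  refine Eq.symm ((integral_mul_measureReal_prodMk (hf'.integrableOn_Ioc a b)
    (measurableSet_fst_le measurable_id hU)).trans ?_)
  congr 1; ext ω
  change ∫ u in Iic (U ω), f' u ∂(volume.restrict (Ioc a b)) = _
  rw [Measure.restrict_restrict measurableSet_Iic, inter_comm]
  exact setIntegral_Ioc_inter_Iic hf hf' a b (U ω)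

theorem integral_comp_max_min_sub_mul [IsFiniteMeasure μ] (hU : Measurable U) (hV : Measurable V)
    (hf : ∀ x, HasDerivAt f (f' x) x) (hg : ∀ x, HasDerivAt g (g' x) x)
    (hf' : LocallyIntegrable f') (hg' : LocallyIntegrable g') (a b c d : ℝ) :
    ∫ ω, (f (max a (min b (U ω))) - f a) * (g (max c (min d (V ω))) - g c) ∂μ =
      ∫ p in Ioc a b ×ˢ Ioc c d, f' p.1 * g' p.2 * μ.real {ω | p.1 ≤ U ω ∧ p.2 ≤ V ω} := by
  refine Eq.symm ((integral_mul_measureReal_prodMk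
    ((hf'.integrableOn_Ioc a b).mul_prod (hg'.integrableOn_Ioc c d))
    ((measurableSet_fst_le measurable_fst hU).inter
      (measurableSet_fst_le measurable_snd hV))).trans ?_)
  congr 1; ext ω
  change ∫ p in Iic (U ω) ×ˢ Iic (V ω), f' p.1 * g' p.2
    ∂(volume.restrict (Ioc a b ×ˢ Ioc c d)) = _
  rw [Measure.restrict_restrict (measurableSet_Iic.prod measurableSet_Iic), prod_inter_prod,
    Measure.volume_eq_prod, setIntegral_prod_mul, inter_comm (Iic (U ω)),
    inter_comm (Iic (V ω)), setIntegral_Ioc_inter_Iic hf hf', setIntegral_Ioc_inter_Iic hg hg']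

theorem setIntegral_Ioc_prod_Ioc_hoeffdingKernel [IsProbabilityMeasure μ] (hU : Measurable U)
    (hV : Measurable V) (hf : ∀ x, HasDerivAt f (f' x) x) (hg : ∀ x, HasDerivAt g (g' x) x)
    (hf' : LocallyIntegrable f') (hg' : LocallyIntegrable g') (a b c d : ℝ) :
    ∫ p in Ioc a b ×ˢ Ioc c d, f' p.1 * g' p.2 * hoeffdingKernel μ U V p.1 p.2 =
      cov[fun ω => f (max a (min b (U ω))), fun ω => g (max c (min d (V ω))); μ] := by
  set A := fun ω => f (max a (min b (U ω))) - f a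
  set B := fun ω => g (max c (min d (V ω))) - g c
  have hA : Integrable A μ := integrable_comp_max_min_sub hU hf hf' a b
  have hB : Integrable B μ := integrable_comp_max_min_sub hV hg hg' c d
  have hAB : Integrable (fun ω => A ω * B ω) μ := hB.bdd_mul hA.aestronglyMeasurable
    (ae_of_all _ fun ω => abs_comp_max_min_sub_le_setIntegral_abs hf hf' a b (U ω))
  have hfU : Integrable (fun ω => f (max a (min b (U ω)))) μ :=
    (hA.add (integrable_const (f a))).congr (ae_of_all _ fun _ => sub_add_cancel _ _)
  have hgV : Integrable (fun ω => g (max c (min d (V ω)))) μ :=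
    (hB.add (integrable_const (g c))).congr (ae_of_all _ fun _ => sub_add_cancel _ _)
  have hJ : IntegrableOn (fun p : ℝ × ℝ => f' p.1 * g' p.2 * μ.real {ω | p.1 ≤ U ω ∧ p.2 ≤ V ω})
      (Ioc a b ×ˢ Ioc c d) :=
    ((hf'.integrableOn_Ioc a b).mul_prod (hg'.integrableOn_Ioc c d)).mul_measureReal_prodMk
      ((measurableSet_fst_le measurable_fst hU).inter (measurableSet_fst_le measurable_snd hV))
  have hP : IntegrableOn (fun p : ℝ × ℝ => f' p.1 * μ.real {ω | p.1 ≤ U ω} *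
      (g' p.2 * μ.real {ω | p.2 ≤ V ω})) (Ioc a b ×ˢ Ioc c d) :=
    IntegrableOn.mul_prod
      ((hf'.integrableOn_Ioc a b).mul_measureReal_prodMk (measurableSet_fst_le measurable_id hU))
      ((hg'.integrableOn_Ioc c d).mul_measureReal_prodMk (measurableSet_fst_le measurable_id hV))
  calc ∫ p in Ioc a b ×ˢ Ioc c d, f' p.1 * g' p.2 * hoeffdingKernel μ U V p.1 p.2
      = (∫ p in Ioc a b ×ˢ Ioc c d, f' p.1 * g' p.2 * μ.real {ω | p.1 ≤ U ω ∧ p.2 ≤ V ω}) -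
          ∫ p in Ioc a b ×ˢ Ioc c d, f' p.1 * μ.real {ω | p.1 ≤ U ω} *
            (g' p.2 * μ.real {ω | p.2 ≤ V ω}) := by
        rw [← integral_sub hJ hP]
        congr 1; ext p
        simp only [hoeffdingKernel]
        ring
    _ = ∫ ω, A ω * B ω ∂μ - (∫ ω, A ω ∂μ) * ∫ ω, B ω ∂μ := by
        rw [← integral_comp_max_min_sub_mul hU hV hf hg hf' hg', Measure.volume_eq_prod,
          setIntegral_prod_mul (fun u => f' u * μ.real {ω | u ≤ U ω})
            (fun v => g' v * μ.real {ω | v ≤ V ω}), ← integral_comp_max_min_sub hU hf hf',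
          ← integral_comp_max_min_sub hV hg hg']
    _ = cov[A, B; μ] := (covariance_eq_sub_of_integrable hA hB hAB).symm
    _ = _ := by rw [covariance_sub_const_left hfU, covariance_sub_const_right hgV]

end Rectangle

section Truncation

variable {Ω : Type*} [MeasurableSpace Ω] {μ : Measure Ω} {X : Ω → ℝ} {φ : ℝ → ℝ}

theorem tendsto_setIntegral_le_atTop (hX : Measurable X) {F : Ω → ℝ} (hF : Integrable F μ) :
    Tendsto (fun K => ∫ ω in {ω | K ≤ X ω}, F ω ∂μ) atTop (𝓝 0) := by
  have hlt := tendsto_setIntegral_of_eventually_mem (l := atTop)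
    (fun K => measurableSet_lt hX measurable_const) (fun ω => eventually_gt_atTop (X ω)) hF
  have hcompl : ∀ K, {ω | K ≤ X ω} = {ω | X ω < K}ᶜ := fun K => by ext; simp
  simp_rw [hcompl, setIntegral_compl (measurableSet_lt hX measurable_const) hF]
  simpa using (tendsto_const_nhds (x := ∫ ω, F ω ∂μ)).sub hlt

theorem exists_ge_mul_setIntegral_le (hX : Measurable X) {h : ℝ → ℝ} (hh : ∀ x, 0 ≤ h x)
    {w : Ω → ℝ} (hw0 : ∀ ω, 0 ≤ w ω) (hw : Integrable w μ)
    (hhw : Integrable (fun ω => h (X ω) * w ω) μ) {K δ : ℝ}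
    (hK : ∫ ω in {ω | K ≤ X ω}, h (X ω) * w ω ∂μ < δ) :
    ∃ b, K ≤ b ∧ h b * ∫ ω in {ω | b ≤ X ω}, w ω ∂μ ≤ δ := by
  set G := fun b => ∫ ω in {ω | b ≤ X ω}, w ω ∂μ
  by_contra! hcon
  have hδ : 0 < δ := (setIntegral_nonneg (measurableSet_le measurable_const hX)
    fun ω _ => mul_nonneg (hh _) (hw0 ω)).trans_lt hK
  have hGK : 0 < G K := pos_of_mul_pos_right (hδ.trans (hcon K le_rfl)) (hh K)
  -- on `{K ≤ X}`, `h X ≥ δ / G K` because `G` is antitone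
  have hlow : ∀ ω ∈ {ω | K ≤ X ω}, δ / G K * w ω ≤ h (X ω) * w ω := by
    intro ω (hω : K ≤ X ω)
    refine mul_le_mul_of_nonneg_right ?_ (hw0 ω)
    rw [div_le_iff₀ hGK]
    calc δ ≤ h (X ω) * G (X ω) := (hcon _ hω).le
      _ ≤ h (X ω) * G K := mul_le_mul_of_nonneg_left (setIntegral_mono_set hw.integrableOn
          (ae_of_all _ hw0) (LE.le.eventuallyLE fun ω' hω' => hω.trans hω')) (hh _)
  have : δ ≤ ∫ ω in {ω | K ≤ X ω}, h (X ω) * w ω ∂μ :=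
    calc δ = ∫ ω in {ω | K ≤ X ω}, δ / G K * w ω ∂μ := by
          rw [integral_const_mul, div_mul_cancel₀ _ hGK.ne']
      _ ≤ _ := setIntegral_mono_on (hw.integrableOn.const_mul _) hhw.integrableOn
          (measurableSet_le measurable_const hX) hlow
  linarith

variable {w : Ω → ℝ}

theorem integrable_abs_comp_min_sub_mul (hX : Measurable X) (hφ : Measurable φ)
    (hw0 : ∀ ω, 0 ≤ w ω) (hw : Integrable w μ) (hφw : Integrable (fun ω => φ (X ω) * w ω) μ)
    (b : ℝ) : Integrable (fun ω => |φ (min b (X ω)) - φ (X ω)| * w ω) μ := by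
  have habs : Integrable (fun ω => |φ (X ω)| * w ω) μ := by
    simpa [abs_mul, abs_of_nonneg (hw0 _)] using hφw.abs
  refine Integrable.mono' (((hw.const_mul |φ b|).add habs).indicator
    (measurableSet_le measurable_const hX : MeasurableSet {ω | b ≤ X ω})) ?_
    (ae_of_all _ fun ω => ?_)
  · exact (((hφ.comp (measurable_const.min hX)).sub (hφ.comp hX)).abs.aestronglyMeasurable).mul
      hw.aestronglyMeasurable
  · rw [Real.norm_of_nonneg (mul_nonneg (abs_nonneg _) (hw0 ω))]
    exact abs_comp_min_sub_mul_le_indicator hw0 b ω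

theorem frequently_integral_abs_comp_min_sub_mul_le (hX : Measurable X) (hw0 : ∀ ω, 0 ≤ w ω)
    (hw : Integrable w μ) (hφw : Integrable (fun ω => φ (X ω) * w ω) μ) {δ : ℝ} (hδ : 0 < δ) :
    ∃ᶠ b in atTop, ∫ ω, |φ (min b (X ω)) - φ (X ω)| * w ω ∂μ ≤ δ := by
  have habs : Integrable (fun ω => |φ (X ω)| * w ω) μ := by
    simpa [abs_mul, abs_of_nonneg (hw0 _)] using hφw.abs
  rw [frequently_atTop]
  intro k
  obtain ⟨K, hK, hkK⟩ := (((tendsto_setIntegral_le_atTop hX habs).eventually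
    (eventually_lt_nhds (half_pos hδ))).and (eventually_ge_atTop k)).exists
  obtain ⟨b, hKb, hb⟩ :=
    exists_ge_mul_setIntegral_le hX (fun x => abs_nonneg (φ x)) hw0 hw habs hK
  have htail : ∫ ω in {ω | b ≤ X ω}, |φ (X ω)| * w ω ∂μ ≤ δ / 2 :=
    (setIntegral_mono_set habs.integrableOn
      (ae_of_all _ fun ω => mul_nonneg (abs_nonneg _) (hw0 ω))
      (LE.le.eventuallyLE fun ω (hω : b ≤ X ω) => hKb.trans hω)).trans hK.le
  refine ⟨b, hkK.trans hKb, ?_⟩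
  calc ∫ ω, |φ (min b (X ω)) - φ (X ω)| * w ω ∂μ
      ≤ ∫ ω in {ω | b ≤ X ω}, (|φ b| * w ω + |φ (X ω)| * w ω) ∂μ := by
        rw [← integral_indicator (measurableSet_le measurable_const hX)]
        exact integral_mono_of_nonneg
          (ae_of_all _ fun ω => mul_nonneg (abs_nonneg _) (hw0 ω))
          (((hw.const_mul _).add habs).indicator (measurableSet_le measurable_const hX))
          (ae_of_all _ (abs_comp_min_sub_mul_le_indicator hw0 b))
    _ = |φ b| * (∫ ω in {ω | b ≤ X ω}, w ω ∂μ) +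
          ∫ ω in {ω | b ≤ X ω}, |φ (X ω)| * w ω ∂μ := by
        rw [integral_add (hw.const_mul _).integrableOn habs.integrableOn, integral_const_mul]
    _ ≤ δ / 2 + δ / 2 := add_le_add hb htail
    _ = δ := add_halves δ

theorem exists_tendsto_integral_abs_comp_max_min_sub_mul (hX : Measurable X) (hφ : Measurable φ)
    (hw0 : ∀ ω, 0 ≤ w ω) (hw : Integrable w μ) (hφw : Integrable (fun ω => φ (X ω) * w ω) μ) :
    ∃ a b : ℕ → ℝ, Tendsto a atTop atBot ∧ Tendsto b atTop atTop ∧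
      Tendsto (fun n => ∫ ω, |φ (max (a n) (min (b n) (X ω))) - φ (X ω)| * w ω ∂μ) atTop
        (𝓝 0) := by
  -- truncating `X` from below is truncating `-X` from above
  have hφw' : Integrable (fun ω => φ (-(-X ω)) * w ω) μ := by simpa using hφw
  have hmax : ∀ a, (fun ω => |φ (-min a (-X ω)) - φ (-(-X ω))| * w ω) =
      fun ω => |φ (max (-a) (X ω)) - φ (X ω)| * w ω := fun a => by
    funext ω; rw [← max_neg_neg, neg_neg]
  have hcut : ∀ n : ℕ, ∃ a b : ℝ, a ≤ -n ∧ n ≤ b ∧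
      ∫ ω, |φ (max a (min b (X ω))) - φ (X ω)| * w ω ∂μ ≤ 1 / (n + 1) := by
    intro n
    have hδ : (0 : ℝ) < 1 / (n + 1) / 2 := by positivity
    obtain ⟨b, hnb, hb⟩ := frequently_atTop.1
      (frequently_integral_abs_comp_min_sub_mul_le hX hw0 hw hφw hδ) n
    obtain ⟨a, hna, ha⟩ := frequently_atTop.1
      (frequently_integral_abs_comp_min_sub_mul_le (X := fun ω => -X ω) (φ := fun x => φ (-x))
        hX.neg hw0 hw hφw' hδ) n
    have hlow := integrable_abs_comp_min_sub_mul (X := fun ω => -X ω) (φ := fun x => φ (-x))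
      hX.neg (hφ.comp measurable_neg) hw0 hw hφw' a
    have hup := integrable_abs_comp_min_sub_mul hX hφ hw0 hw hφw b
    rw [hmax] at ha hlow
    refine ⟨-a, b, neg_le_neg hna, hnb, ?_⟩
    calc ∫ ω, |φ (max (-a) (min b (X ω))) - φ (X ω)| * w ω ∂μ
        ≤ ∫ ω, (|φ (max (-a) (X ω)) - φ (X ω)| * w ω +
            |φ (min b (X ω)) - φ (X ω)| * w ω) ∂μ := by
          refine integral_mono_of_nonneg (ae_of_all _ fun ω => mul_nonneg (abs_nonneg _) (hw0 ω))
            (hlow.add hup) (ae_of_all _ fun ω => ?_)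
          dsimp only
          rw [comp_max_min_sub φ (by linarith [n.cast_nonneg (α := ℝ)]), ← add_mul]
          exact mul_le_mul_of_nonneg_right (abs_add_le _ _) (hw0 ω)
      _ ≤ 1 / (n + 1) / 2 + 1 / (n + 1) / 2 := by
          rw [integral_add hlow hup]
          exact add_le_add ha hb
      _ = 1 / (n + 1) := add_halves _
  choose a b ha hb hab using hcut
  refine ⟨a, b, tendsto_atBot_mono ha (tendsto_neg_atTop_atBot.comp tendsto_natCast_atTop_atTop),
    tendsto_atTop_mono hb tendsto_natCast_atTop_atTop, ?_⟩
  exact squeeze_zero (fun n => integral_nonneg fun ω => mul_nonneg (abs_nonneg _) (hw0 ω)) hab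
    tendsto_one_div_add_atTop_nhds_zero_nat

theorem integrable_comp_max_min_mul (hX : Measurable X) (hφ : Measurable φ) {W : Ω → ℝ}
    (hW : Integrable W μ) (hφW : Integrable (fun ω => φ (X ω) * W ω) μ) (a b : ℝ) :
    Integrable (fun ω => φ (max a (min b (X ω))) * W ω) μ := by
  refine Integrable.mono' ((hW.norm.const_mul (|φ a| + |φ b|)).add hφW.norm)
    ((hφ.comp (measurable_const.max (measurable_const.min hX))).aestronglyMeasurable.mul
      hW.aestronglyMeasurable) (ae_of_all _ fun ω => ?_)
  simp only [Pi.add_apply, norm_mul, Real.norm_eq_abs]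
  nlinarith [abs_comp_max_min_le φ a b (X ω), abs_nonneg (W ω)]

theorem tendsto_integral_mul_of_tendsto_integral_abs_sub_mul {ι : Type*} {l : Filter ι}
    {Z : ι → Ω → ℝ} {Z₀ W w : Ω → ℝ} (hZW : ∀ i, Integrable (fun ω => Z i ω * W ω) μ)
    (hZ₀W : Integrable (fun ω => Z₀ ω * W ω) μ) (hZw : ∀ i, Integrable (fun ω => Z i ω * w ω) μ)
    (hZ₀w : Integrable (fun ω => Z₀ ω * w ω) μ) (hWw : ∀ ω, |W ω| ≤ w ω)
    (h : Tendsto (fun i => ∫ ω, |Z i ω - Z₀ ω| * w ω ∂μ) l (𝓝 0)) :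
    Tendsto (fun i => ∫ ω, Z i ω * W ω ∂μ) l (𝓝 (∫ ω, Z₀ ω * W ω ∂μ)) := by
  have hw0 : ∀ ω, 0 ≤ w ω := fun ω => (abs_nonneg _).trans (hWw ω)
  rw [tendsto_iff_norm_sub_tendsto_zero]
  refine squeeze_zero (fun _ => norm_nonneg _) (fun i => ?_) h
  rw [← integral_sub (hZW i) hZ₀W]
  refine (norm_integral_le_integral_norm _).trans (integral_mono_of_nonneg
    (ae_of_all _ fun _ => norm_nonneg _) (((hZw i).sub hZ₀w).abs.congr (ae_of_all _ fun ω => ?_))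
    (ae_of_all _ fun ω => ?_))
  · simp only [Pi.sub_apply, ← sub_mul, abs_mul, abs_of_nonneg (hw0 ω)]
  · simp only [← sub_mul, norm_mul, Real.norm_eq_abs]
    exact mul_le_mul_of_nonneg_left (hWw ω) (abs_nonneg _)

theorem exists_tendsto_covariance_comp_max_min [IsProbabilityMeasure μ] (hX : Measurable X)
    (hφ : Measurable φ) {Y : Ω → ℝ} (hφX : Integrable (fun ω => φ (X ω)) μ)
    (hY : Integrable Y μ) (hφXY : Integrable (fun ω => φ (X ω) * Y ω) μ) :
    ∃ a b : ℕ → ℝ, Tendsto a atTop atBot ∧ Tendsto b atTop atTop ∧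
      Tendsto (fun n => cov[fun ω => φ (max (a n) (min (b n) (X ω))), Y; μ]) atTop
        (𝓝 cov[fun ω => φ (X ω), Y; μ]) := by
  have hφX1 : Integrable (fun ω => φ (X ω) * 1) μ := by simpa using hφX
  set w := fun ω => 1 + |Y ω|
  have hw : Integrable w μ := (integrable_const 1).add hY.abs
  have hφw : Integrable (fun ω => φ (X ω) * w ω) μ := by
    simp only [w, mul_add, mul_one]
    exact hφX.add (hφXY.norm.mono' (hφX.aestronglyMeasurable.mul hY.aestronglyMeasurable.norm)
      (ae_of_all _ fun ω => by simp))
  obtain ⟨a, b, ha, hb, hlim⟩ := exists_tendsto_integral_abs_comp_max_min_sub_mul hX hφ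
    (fun ω => by positivity) hw hφw
  refine ⟨a, b, ha, hb, ?_⟩
  have hZ := fun n => integrable_comp_max_min_mul hX hφ (integrable_const 1) hφX1 (a n) (b n)
  have hZY := fun n => integrable_comp_max_min_mul hX hφ hY hφXY (a n) (b n)
  have hZw := fun n => integrable_comp_max_min_mul hX hφ hw hφw (a n) (b n)
  have hmean := tendsto_integral_mul_of_tendsto_integral_abs_sub_mul hZ hφX1 hZw hφw
    (fun ω => by simp [w]) hlim
  have hprod := tendsto_integral_mul_of_tendsto_integral_abs_sub_mul hZY hφXY hZw hφw
    (fun ω => by simp [w]) hlim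
  simp only [mul_one] at hmean hZ
  rw [covariance_eq_sub_of_integrable hφX hY hφXY]
  refine (hprod.sub (hmean.mul_const _)).congr fun n => ?_
  rw [covariance_eq_sub_of_integrable (hZ n) hY (hZY n)]

end Truncation

theorem setIntegral_univ_prod_Ioc_hoeffdingKernel {Ω : Type*} [MeasurableSpace Ω] {μ : Measure Ω}
    [IsProbabilityMeasure μ] {U V : Ω → ℝ} {f g f' g' : ℝ → ℝ} (hU : Measurable U)
    (hV : Measurable V) (hf : ∀ x, HasDerivAt f (f' x) x) (hg : ∀ x, HasDerivAt g (g' x) x)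
    (hf' : LocallyIntegrable f') (hg' : LocallyIntegrable g')
    (hfU : Integrable (fun ω => f (U ω)) μ) (hgV : Integrable (fun ω => g (V ω)) μ)
    (hfgUV : Integrable (fun ω => f (U ω) * g (V ω)) μ) {c d : ℝ}
    (hint : IntegrableOn (fun p : ℝ × ℝ => f' p.1 * g' p.2 * hoeffdingKernel μ U V p.1 p.2)
      (univ ×ˢ Ioc c d)) :
    ∫ p in univ ×ˢ Ioc c d, f' p.1 * g' p.2 * hoeffdingKernel μ U V p.1 p.2 =
      cov[fun ω => f (U ω), fun ω => g (max c (min d (V ω))); μ] := by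
  have hgcd : Integrable (fun ω => g (max c (min d (V ω)))) μ := by
    simpa using integrable_comp_max_min_mul hV (measurable_of_hasDerivAt hg) (integrable_const 1)
      (by simpa using hgV) c d
  have hfgcd : Integrable (fun ω => f (U ω) * g (max c (min d (V ω)))) μ := by
    simpa only [mul_comm] using integrable_comp_max_min_mul hV (measurable_of_hasDerivAt hg) hfU
      (by simpa only [mul_comm] using hfgUV) c d
  obtain ⟨a, b, ha, hb, hcov⟩ :=
    exists_tendsto_covariance_comp_max_min hU (measurable_of_hasDerivAt hf) hfU hgcd hfgcd
  refine tendsto_nhds_unique ((tendsto_setIntegral_preimage_Ioc measurable_fst hint ha hb).congr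
    fun n => ?_) hcov
  rw [Measure.restrict_restrict (measurable_fst measurableSet_Ioc), univ_prod, ← Set.prod_eq,
    setIntegral_Ioc_prod_Ioc_hoeffdingKernel hU hV hf hg hf' hg']

theorem hoeffding_covariance_identity_general
    {Ω : Type*} [MeasurableSpace Ω] (μ : Measure Ω) [IsProbabilityMeasure μ]
    (U V : Ω → ℝ) (hU : Measurable U) (hV : Measurable V)
    (f g f' g' : ℝ → ℝ)
    (hf : ∀ x, HasDerivAt f (f' x) x) (hg : ∀ x, HasDerivAt g (g' x) x)
    (hf' : Continuous f') (hg' : Continuous g')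
    (H : ℝ → ℝ → ℝ)
    (hH : ∀ u v, H u v = (μ {ω | u ≤ U ω ∧ v ≤ V ω}).toReal -
      (μ {ω | u ≤ U ω}).toReal * (μ {ω | v ≤ V ω}).toReal)
    (hint1 : Integrable (fun ω => f (U ω)) μ)
    (hint2 : Integrable (fun ω => g (V ω)) μ)
    (hint3 : Integrable (fun ω => f (U ω) * g (V ω)) μ)
    (hint4 : Integrable (fun p : ℝ × ℝ => f' p.1 * g' p.2 * H p.1 p.2)
      (volume : Measure (ℝ × ℝ))) :
    (∫ ω, f (U ω) * g (V ω) ∂μ) - (∫ ω, f (U ω) ∂μ) * (∫ ω, g (V ω) ∂μ) =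
      ∫ p : ℝ × ℝ, f' p.1 * g' p.2 * H p.1 p.2 := by
  obtain rfl : H = hoeffdingKernel μ U V := funext₂ hH
  obtain ⟨c, d, hc, hd, hcov⟩ := exists_tendsto_covariance_comp_max_min hV
    (measurable_of_hasDerivAt hg) hint2 hint1 (by simpa only [mul_comm] using hint3)
  rw [← covariance_eq_sub_of_integrable hint1 hint2 hint3, covariance_comm]
  refine tendsto_nhds_unique hcov
    ((tendsto_setIntegral_preimage_Ioc measurable_snd hint4 hc hd).congr fun n => ?_)
  rw [← univ_prod, setIntegral_univ_prod_Ioc_hoeffdingKernel hU hV hf hg hf'.locallyIntegrable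
    hg'.locallyIntegrable hint1 hint2 hint3 hint4.integrableOn, covariance_comm]

/-- Hoeffding/Newman covariance identity:
`Cov(f(U), g(V)) = ∬ f'(u) g'(v) H(u,v) du dv`, where
`H(u,v) = P(U ≥ u, V ≥ v) − P(U ≥ u) P(V ≥ v)`. -/
theorem hoeffding_covariance_identity
    {Ω : Type*} [MeasurableSpace Ω] (μ : Measure Ω) [IsProbabilityMeasure μ]
    (U V : Ω → ℝ) (hU : Measurable U) (hV : Measurable V)
    (f g f' g' : ℝ → ℝ)
    (hf : ∀ x, HasDerivAt f (f' x) x) (hg : ∀ x, HasDerivAt g (g' x) x)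
    (hf' : Continuous f') (hg' : Continuous g')
    (H : ℝ → ℝ → ℝ)
    (hH : ∀ u v, H u v = (μ {ω | u ≤ U ω ∧ v ≤ V ω}).toReal -
      (μ {ω | u ≤ U ω}).toReal * (μ {ω | v ≤ V ω}).toReal)
    (hint1 : Integrable (fun ω => f (U ω)) μ)
    (hint2 : Integrable (fun ω => g (V ω)) μ)
    (hint3 : Integrable (fun ω => f (U ω) * g (V ω)) μ)
    (hint4 : Integrable (fun p : ℝ × ℝ => f' p.1 * g' p.2 * H p.1 p.2)
      (volume : Measure (ℝ × ℝ)))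
    (hintH : Integrable (fun p : ℝ × ℝ => H p.1 p.2) (volume : Measure (ℝ × ℝ))) :
    (∫ ω, f (U ω) * g (V ω) ∂μ) - (∫ ω, f (U ω) ∂μ) * (∫ ω, g (V ω) ∂μ) =
      ∫ p : ℝ × ℝ, f' p.1 * g' p.2 * H p.1 p.2 :=
  hoeffding_covariance_identity_general μ U V hU hV f g f' g' hf hg hf' hg' H hH hint1 hint2 hint3
    hint4
end

section
/- Let X₁, X₂, … be i.i.d. uniform on a finite alphabet of size N, write p = 1/N, fix distinct targets b_i ≠ b_j, and let R_i, R_j be the first hitting times of b_i and b_j respectively. Then for any x ≥ 1, P(R_j = y | R_i = x) = (p/(1−p))((1−2p)/(1−p))^{y−1} for y < x, and P(R_j = y | R_i = x) = ((1−2p)/(1−p))^{x−1}(1−p)^{y−x−1} p for y > x. -/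
open MeasureTheory ProbabilityTheory Finset

/-!
Both joint events are cylinder events. For `y < x`, `R_i = x ∧ R_j = y` says that draws
`1, …, y - 1` avoid `{b_i, b_j}`, draw `y` is `b_j`, draws `y + 1, …, x - 1` avoid `b_i` and draw
`x` is `b_i`; by independence it has probability `(1 - 2p)^(y-1) p (1 - p)^(x-y-1) p`. Dividing by
`P(R_i = x) = (1 - p)^(x-1) p` gives the first formula; for `x < y` swap the roles of `b_i, b_j`.
-/

/-- `sInf ∅ = 0`, so a sequence that never visits `b` gets the value `0`. -/
noncomputable def firstVisit {α : Type*} (a : ℕ → α) (b : α) : ℕ := sInf {t | 1 ≤ t ∧ a t = b}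

section firstVisit

variable {α : Type*} {a : ℕ → α} {b c : α} {x u v : ℕ}

theorem firstVisit_eq_iff (hx : 1 ≤ x) :
    firstVisit a b = x ↔ a x = b ∧ ∀ t ∈ Ico 1 x, a t ≠ b := by
  constructor
  · rintro rfl
    refine ⟨(Nat.sInf_mem (Nat.nonempty_of_pos_sInf hx)).2, fun t ht hat => ?_⟩
    exact Nat.notMem_of_lt_sInf (mem_Ico.1 ht).2 ⟨(mem_Ico.1 ht).1, hat⟩
  · rintro ⟨hxb, hlt⟩
    refine le_antisymm (Nat.sInf_le ⟨hx, hxb⟩) (le_csInf ⟨x, hx, hxb⟩ fun t ht => ?_)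
    by_contra! htx
    exact hlt t (mem_Ico.2 ⟨ht.1, htx⟩) ht.2

theorem firstVisit_eq_iff_forall_mem_Icc (hx : 1 ≤ x) :
    firstVisit a b = x ↔ ∀ t ∈ Icc 1 x, a t ∈ (if t < x then {b}ᶜ else {b} : Set α) := by
  rw [firstVisit_eq_iff hx]
  simp only [mem_Ico, mem_Icc]
  constructor
  · rintro ⟨hxb, hlt⟩ t ⟨ht1, htx⟩
    split_ifs with h
    · exact hlt t ⟨ht1, h⟩
    · rwa [show t = x by omega]
  · intro h
    refine ⟨by simpa using h x ⟨hx, le_rfl⟩, fun t ht => ?_⟩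
    simpa [ht.2] using h t ⟨ht.1, ht.2.le⟩

theorem firstVisit_eq_and_firstVisit_eq_iff_forall_mem_Icc (hbc : b ≠ c) (hv : 1 ≤ v)
    (hvu : v < u) :
    firstVisit a b = u ∧ firstVisit a c = v ↔ ∀ t ∈ Icc 1 u, a t ∈
      (if t < v then {b, c}ᶜ else if t = v then {c} else if t < u then {b}ᶜ else {b} : Set α) := by
  rw [firstVisit_eq_iff (hv.trans hvu.le), firstVisit_eq_iff hv]
  simp only [mem_Ico, mem_Icc]
  constructor
  · rintro ⟨⟨hub, hltu⟩, hvc, hltv⟩ t ⟨ht1, htu⟩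
    split_ifs with h1 h2 h3
    · simp [hltu t ⟨ht1, by omega⟩, hltv t ⟨ht1, h1⟩]
    · rwa [h2]
    · exact hltu t ⟨ht1, h3⟩
    · rwa [show t = u by omega]
  · intro h
    have hu := h u ⟨by omega, le_rfl⟩
    have hvc := h v ⟨hv, hvu.le⟩
    simp only [lt_irrefl, if_false, if_true, show ¬u < v by omega, show u ≠ v by omega,
      Set.mem_singleton_iff] at hu hvc
    refine ⟨⟨hu, fun t ht hat => ?_⟩, hvc, fun t ht hat => ?_⟩
    · have := h t ⟨ht.1, ht.2.le⟩
      split_ifs at this with h1 h2 <;> simp_all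
    · have := h t ⟨ht.1, by omega⟩
      simp [ht.2, hat] at this

end firstVisit

section hitting

variable {Ω α : Type*} [MeasurableSpace Ω] {μ : Measure Ω} [MeasurableSpace α] {X : ℕ → Ω → α}

theorem ProbabilityTheory.iIndepFun.measureReal_setOf_forall_mem (hX : iIndepFun X μ)
    (s : Finset ℕ) {g : ℕ → Set α} (hg : ∀ t, MeasurableSet (g t)) :
    μ.real {ω | ∀ t ∈ s, X t ω ∈ g t} = ∏ t ∈ s, μ.real (X t ⁻¹' g t) := by
  have hset : {ω | ∀ t ∈ s, X t ω ∈ g t} = ⋂ t ∈ s, X t ⁻¹' g t := by ext; simp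
  rw [hset, measureReal_def, hX.meas_biInter fun t _ => ⟨g t, hg t, rfl⟩, ENNReal.toReal_prod]
  rfl

theorem measure_eq_ofReal_mul_of_measureReal_eq [IsFiniteMeasure μ] {s t : Set Ω} {c : ℝ}
    (h : μ.real s = c * μ.real t) : μ s = ENNReal.ofReal c * μ t := by
  rw [← ofReal_measureReal, ← ofReal_measureReal (s := t), h,
    ENNReal.ofReal_mul' measureReal_nonneg]

variable [MeasurableSingletonClass α] {p : ℝ}

theorem measureReal_preimage_finset [IsFiniteMeasure μ] (hXm : ∀ t, Measurable (X t))
    (hXp : ∀ t a, μ.real (X t ⁻¹' {a}) = p) (t : ℕ) (s : Finset α) :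
    μ.real (X t ⁻¹' s) = #s * p := by
  rw [← sum_measureReal_preimage_singleton s fun a _ => hXm t (measurableSet_singleton a)]
  simp [hXp]

variable [IsProbabilityMeasure μ]

theorem measureReal_preimage_compl_finset (hXm : ∀ t, Measurable (X t))
    (hXp : ∀ t a, μ.real (X t ⁻¹' {a}) = p) (t : ℕ) (s : Finset α) :
    μ.real (X t ⁻¹' (↑s)ᶜ) = 1 - #s * p := by
  rw [Set.preimage_compl, measureReal_compl (hXm t s.measurableSet), probReal_univ,
    measureReal_preimage_finset hXm hXp]

theorem measureReal_firstVisit_eq (hX : iIndepFun X μ) (hXm : ∀ t, Measurable (X t))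
    (hXp : ∀ t a, μ.real (X t ⁻¹' {a}) = p) (b : α) {x : ℕ} (hx : 1 ≤ x) :
    μ.real {ω | firstVisit (X · ω) b = x} = (1 - p) ^ (x - 1) * p := by
  simp_rw [firstVisit_eq_iff_forall_mem_Icc hx]
  rw [hX.measureReal_setOf_forall_mem _ fun t => by split_ifs <;> simp,
    ← prod_Ico_mul_eq_prod_Icc hx, if_neg (lt_irrefl x), hXp,
    prod_congr rfl fun t ht => by rw [if_pos (mem_Ico.1 ht).2, ← coe_singleton,
      measureReal_preimage_compl_finset hXm hXp, card_singleton, Nat.cast_one, one_mul],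
    prod_const, Nat.card_Ico]

theorem measureReal_firstVisit_eq_and_firstVisit_eq (hX : iIndepFun X μ)
    (hXm : ∀ t, Measurable (X t)) (hXp : ∀ t a, μ.real (X t ⁻¹' {a}) = p) {b c : α}
    (hbc : b ≠ c) {u v : ℕ} (hv : 1 ≤ v) (hvu : v < u) :
    μ.real {ω | firstVisit (X · ω) b = u ∧ firstVisit (X · ω) c = v} =
      (1 - 2 * p) ^ (v - 1) * p * ((1 - p) ^ (u - v - 1) * p) := by
  classical
  simp_rw [firstVisit_eq_and_firstVisit_eq_iff_forall_mem_Icc hbc hv hvu]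
  rw [hX.measureReal_setOf_forall_mem _ fun t => by split_ifs <;> simp,
    ← prod_Ico_mul_eq_prod_Icc (by omega), ← prod_Ico_consecutive _ hv hvu.le,
    ← mul_prod_Ioo_eq_prod_Ico hvu,
    prod_congr rfl fun t ht => by rw [if_pos (mem_Ico.1 ht).2, ← coe_pair,
      measureReal_preimage_compl_finset hXm hXp, card_pair hbc, Nat.cast_two],
    prod_congr (s₂ := Ioo v u) rfl fun t ht => by
      obtain ⟨hvt, htu⟩ := mem_Ioo.1 ht
      rw [if_neg hvt.not_gt, if_neg hvt.ne', if_pos htu, ← coe_singleton,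
        measureReal_preimage_compl_finset hXm hXp, card_singleton, Nat.cast_one, one_mul],
    if_neg (lt_irrefl v), if_pos rfl, if_neg hvu.not_gt, if_neg hvu.ne', if_neg (lt_irrefl u),
    hXp, hXp, prod_const, prod_const, Nat.card_Ico, Nat.card_Ioo]
  ring

end hitting

theorem hitting_time_conditional_distribution_general
    {Ω : Type*} [MeasurableSpace Ω] (μ : Measure Ω) [IsProbabilityMeasure μ]
    (N : ℕ)
    (X : ℕ → Ω → Fin N)
    (hmeas : ∀ i, Measurable (X i))
    (hindep : iIndepFun X μ)
    (hunif : ∀ i (a : Fin N), μ {ω | X i ω = a} = 1 / N)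
    (bi bj : Fin N) (hbij : bi ≠ bj)
    (Ri Rj : Ω → ℕ)
    (hRi : ∀ ω, Ri ω = sInf {t | 1 ≤ t ∧ X t ω = bi})
    (hRj : ∀ ω, Rj ω = sInf {t | 1 ≤ t ∧ X t ω = bj})
    (p : ℝ) (hp : p = 1 / N) :
    ∀ x : ℕ, 1 ≤ x → ∀ y : ℕ, 1 ≤ y →
      (y < x →
        μ {ω | Ri ω = x ∧ Rj ω = y} =
          ENNReal.ofReal ((p / (1 - p)) * ((1 - 2 * p) / (1 - p)) ^ (y - 1)) *
            μ {ω | Ri ω = x}) ∧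
      (x < y →
        μ {ω | Ri ω = x ∧ Rj ω = y} =
          ENNReal.ofReal (((1 - 2 * p) / (1 - p)) ^ (x - 1) * (1 - p) ^ (y - x - 1) * p) *
            μ {ω | Ri ω = x}) := by
  have hXp : ∀ t a, μ.real (X t ⁻¹' {a}) = p := fun t a => by
    simp [measureReal_def, Set.preimage, hunif, hp]
  have hp1 : 1 - p ≠ 0 := by
    have hN : N ≠ 1 := by rintro rfl; exact hbij (Subsingleton.elim _ _)
    rwa [hp, sub_ne_zero, ne_comm, one_div, inv_ne_one, Nat.cast_ne_one]
  obtain rfl : Ri = fun ω => firstVisit (X · ω) bi := funext hRi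
  obtain rfl : Rj = fun ω => firstVisit (X · ω) bj := funext hRj
  intro x hx y hy
  refine ⟨fun hyx => ?_, fun hxy => ?_⟩ <;> apply measure_eq_ofReal_mul_of_measureReal_eq
  · rw [measureReal_firstVisit_eq_and_firstVisit_eq hindep hmeas hXp hbij hy hyx,
      measureReal_firstVisit_eq hindep hmeas hXp bi hx,
      show x - 1 = (y - 1) + (x - y - 1) + 1 by omega, div_pow]
    field_simp
    ring
  · simp_rw [and_comm (a := firstVisit _ bi = x)]
    rw [measureReal_firstVisit_eq_and_firstVisit_eq hindep hmeas hXp hbij.symm hx hxy,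
      measureReal_firstVisit_eq hindep hmeas hXp bi hx, div_pow]
    field_simp

/-- For i.i.d. uniform draws on an alphabet of size `N ≥ 3` with `p = 1/N`, and
hitting times `R_i, R_j` of two distinct targets, the conditional distribution of
`R_j` given `R_i = x` is:
`P(R_j = y | R_i = x) = (p/(1−p))((1−2p)/(1−p))^{y−1}` for `y < x`, and
`P(R_j = y | R_i = x) = ((1−2p)/(1−p))^{x−1}(1−p)^{y−x−1} p` for `y > x`
(stated in joint form `P(R_i = x, R_j = y) = P(R_j = y | R_i = x) · P(R_i = x)`). -/
theorem hitting_time_conditional_distribution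
    {Ω : Type*} [MeasurableSpace Ω] (μ : Measure Ω) [IsProbabilityMeasure μ]
    (N : ℕ) (hN : 3 ≤ N)
    (X : ℕ → Ω → Fin N)
    (hmeas : ∀ i, Measurable (X i))
    (hindep : iIndepFun X μ)
    (hunif : ∀ i (a : Fin N), μ {ω | X i ω = a} = 1 / N)
    (bi bj : Fin N) (hbij : bi ≠ bj)
    (Ri Rj : Ω → ℕ)
    (hRi : ∀ ω, Ri ω = sInf {t | 1 ≤ t ∧ X t ω = bi})
    (hRj : ∀ ω, Rj ω = sInf {t | 1 ≤ t ∧ X t ω = bj})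
    (p : ℝ) (hp : p = 1 / N) :
    ∀ x : ℕ, 1 ≤ x → ∀ y : ℕ, 1 ≤ y →
      (y < x →
        μ {ω | Ri ω = x ∧ Rj ω = y} =
          ENNReal.ofReal ((p / (1 - p)) * ((1 - 2 * p) / (1 - p)) ^ (y - 1)) *
            μ {ω | Ri ω = x}) ∧
      (x < y →
        μ {ω | Ri ω = x ∧ Rj ω = y} =
          ENNReal.ofReal (((1 - 2 * p) / (1 - p)) ^ (x - 1) * (1 - p) ^ (y - x - 1) * p) *
            μ {ω | Ri ω = x}) :=
  hitting_time_conditional_distribution_general μ N X hmeas hindep hunif bi bj hbij Ri Rj hRi hRj p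
    hp
end

section
/- Let X₁, X₂, … be i.i.d. uniform on a finite alphabet of size |A| = N ≥ 3, p = 1/N, and let R_i, R_j be the hitting times of two distinct targets. Then Cov(log R_i, log R_j) ≥ −p log(1/p) · C for some absolute constant C (in fact Cov(log R_i, log R_j) ≥ p log p for small p), and Cov(log R_i, log R_j) ≤ 0; hence |Cov(log R_i, log R_j)| = O(p log(1/p)) as N → ∞. -/
/-!
Writing `log n = ∑_{k + 2 ≤ n} a_k` with `a_k = log (k + 2) - log (k + 1)`, the covariance of
`log R_i` and `log R_j` becomes
`∑_{k,l} a_k a_l (P(R_i ≥ k+2, R_j ≥ l+2) - P(R_i ≥ k+2) P(R_j ≥ l+2))`.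
With `p = 1/N` these probabilities are `(1-2p)^(min k l + 1) (1-p)^(max k l - min k l)` and
`(1-p)^(k+1) (1-p)^(l+1)`; since `1 - 2p ≤ (1-p)^2` every term is nonpositive. Conversely each gap
is at most `(min k l + 1) p² (1-p)^(k+l)` and `(k + 1) a_k ≤ 1`, so the series is at least
`-p ∑_l a_l (1-p)^l ≥ -p log(1/p) / (1-p)`.
-/

open MeasureTheory ProbabilityTheory Filter Finset

noncomputable def logIncrement (k : ℕ) : ℝ := Real.log (k + 2) - Real.log (k + 1)

lemma logIncrement_nonneg (k : ℕ) : 0 ≤ logIncrement k :=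
  sub_nonneg.2 <| Real.log_le_log (by positivity) (by linarith)

lemma mul_logIncrement_le_one (k : ℕ) : ((k : ℝ) + 1) * logIncrement k ≤ 1 := by
  have hk : (0 : ℝ) < k + 1 := by positivity
  have h := Real.log_le_sub_one_of_pos (x := ((k : ℝ) + 2) / (k + 1)) (by positivity)
  rw [Real.log_div (by positivity) hk.ne'] at h
  have : ((k : ℝ) + 2) / (k + 1) - 1 = 1 / (k + 1) := by field_simp; ring
  rw [this, le_div_iff₀ hk] at h
  simpa [logIncrement, mul_comm] using h

lemma logIncrement_le_one_div (k : ℕ) : logIncrement k ≤ 1 / ((k : ℝ) + 1) := by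
  rw [le_div_iff₀ (by positivity), mul_comm]
  exact mul_logIncrement_le_one k

lemma logIncrement_le_one (k : ℕ) : logIncrement k ≤ 1 :=
  (logIncrement_le_one_div k).trans <| div_le_one_of_le₀ (by simp) (by positivity)

lemma sum_range_logIncrement (m : ℕ) : ∑ k ∈ range m, logIncrement k = Real.log (m + 1) := by
  induction m with
  | zero => simp
  | succ m ih =>
    rw [sum_range_succ, ih, logIncrement]
    push_cast
    ring_nf

lemma Real.log_natCast_eq_tsum (n : ℕ) :
    Real.log n = ∑' k, if k + 2 ≤ n then logIncrement k else 0 := by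
  rcases Nat.lt_or_ge n 2 with hn | hn
  · rw [tsum_congr fun k => if_neg (by omega)]
    interval_cases n <;> simp
  · obtain ⟨m, rfl⟩ : ∃ m, n = m + 1 := ⟨n - 1, by omega⟩
    rw [tsum_eq_sum (s := range m) fun k hk => if_neg (by simpa using hk),
      sum_congr rfl fun k hk => if_pos (by simp at hk; omega), sum_range_logIncrement]
    push_cast; rfl

lemma Real.log_natCast_mul_log_natCast_eq_tsum (m n : ℕ) :
    Real.log m * Real.log n = ∑' kl : ℕ × ℕ,
      if kl.1 + 2 ≤ m ∧ kl.2 + 2 ≤ n then logIncrement kl.1 * logIncrement kl.2 else 0 := by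
  have hfin (n : ℕ) : Summable fun k => ‖if k + 2 ≤ n then logIncrement k else 0‖ :=
    summable_of_ne_finset_zero (s := range n) fun k hk => by simp at hk; simp; omega
  rw [Real.log_natCast_eq_tsum m, Real.log_natCast_eq_tsum n,
    tsum_mul_tsum_of_summable_norm (hfin m) (hfin n)]
  simp only [ite_zero_mul_ite_zero]

/-- `P(R_i ≥ k + 2, R_j ≥ l + 2)` for targets of probability `p` each: up to time `min k l + 1`
both targets are avoided, afterwards only the one with the later deadline. -/
noncomputable def jointSurvival (p : ℝ) (k l : ℕ) : ℝ :=
  (1 - 2 * p) ^ (min k l + 1) * (1 - p) ^ (max k l - min k l)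

lemma jointSurvival_comm (p : ℝ) (k l : ℕ) : jointSurvival p k l = jointSurvival p l k := by
  rw [jointSurvival, jointSurvival, min_comm, max_comm]

lemma jointSurvival_of_le (p : ℝ) {k l : ℕ} (h : k ≤ l) :
    jointSurvival p k l = (1 - 2 * p) ^ (k + 1) * (1 - p) ^ (l - k) := by
  rw [jointSurvival, min_eq_left h, max_eq_right h]

section Series

variable {p : ℝ}

lemma one_sub_two_mul_le_sq : 1 - 2 * p ≤ (1 - p) ^ 2 := by nlinarith [sq_nonneg p]

lemma jointSurvival_nonneg (hp : p ≤ 1 / 2) (k l : ℕ) : 0 ≤ jointSurvival p k l := by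
  have : 0 ≤ 1 - 2 * p := by linarith
  have : 0 ≤ 1 - p := by linarith
  unfold jointSurvival
  positivity

lemma pow_succ_mul_pow_succ_eq {M : Type*} [Monoid M] (x : M) (k l : ℕ) :
    x ^ (k + 1) * x ^ (l + 1) = (x ^ 2) ^ (min k l + 1) * x ^ (max k l - min k l) := by
  rw [← pow_mul, ← pow_add, ← pow_add]
  congr 1
  omega

lemma jointSurvival_le (hp : p ≤ 1 / 2) (k l : ℕ) :
    jointSurvival p k l ≤ (1 - p) ^ (k + 1) * (1 - p) ^ (l + 1) := by
  have : 0 ≤ 1 - p := by linarith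
  rw [pow_succ_mul_pow_succ_eq, jointSurvival]
  gcongr
  · linarith
  · exact one_sub_two_mul_le_sq

lemma sub_jointSurvival_le (hp : p ≤ 1 / 2) (k l : ℕ) :
    (1 - p) ^ (k + 1) * (1 - p) ^ (l + 1) - jointSurvival p k l ≤
      ((min k l : ℕ) + 1) * p ^ 2 * (1 - p) ^ (k + l) := by
  have hr : 0 ≤ 1 - 2 * p := by linarith
  have hq : 0 ≤ 1 - p := by linarith
  have hpow : ((1 - p) ^ 2) ^ (min k l + 1) - (1 - 2 * p) ^ (min k l + 1) ≤
      p ^ 2 * ((min k l : ℕ) + 1) * ((1 - p) ^ 2) ^ min k l := by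
    have h := (le_abs_self _).trans (abs_pow_sub_pow_le ((1 - p) ^ 2) (1 - 2 * p) (min k l + 1))
    rwa [show (1 - p) ^ 2 - (1 - 2 * p) = p ^ 2 by ring, abs_of_nonneg (sq_nonneg p),
      abs_of_nonneg (sq_nonneg _), abs_of_nonneg hr, max_eq_left one_sub_two_mul_le_sq,
      Nat.add_sub_cancel, Nat.cast_succ] at h
  calc (1 - p) ^ (k + 1) * (1 - p) ^ (l + 1) - jointSurvival p k l
      = (((1 - p) ^ 2) ^ (min k l + 1) - (1 - 2 * p) ^ (min k l + 1)) *
          (1 - p) ^ (max k l - min k l) := by rw [pow_succ_mul_pow_succ_eq, jointSurvival]; ring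
    _ ≤ p ^ 2 * ((min k l : ℕ) + 1) * ((1 - p) ^ 2) ^ min k l * (1 - p) ^ (max k l - min k l) := by
        gcongr
    _ = ((min k l : ℕ) + 1) * p ^ 2 * (1 - p) ^ (k + l) := by
        rw [← pow_mul, mul_assoc _ (_ ^ _), ← pow_add]
        have : 2 * min k l + (max k l - min k l) = k + l := by omega
        rw [this]; ring

lemma summable_logIncrement_mul_pow {q : ℝ} (hq0 : 0 ≤ q) (hq1 : q < 1) :
    Summable fun k => logIncrement k * q ^ k :=
  (summable_geometric_of_lt_one hq0 hq1).of_nonneg_of_le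
    (fun k => mul_nonneg (logIncrement_nonneg k) (pow_nonneg hq0 k))
    (fun k => mul_le_of_le_one_left (pow_nonneg hq0 k) (logIncrement_le_one k))

lemma summable_logIncrement_mul_survival (hp0 : 0 < p) (hp1 : p ≤ 1) :
    Summable fun k => logIncrement k * (1 - p) ^ (k + 1) := by
  simpa only [pow_succ, mul_assoc] using
    (summable_logIncrement_mul_pow (by linarith) (by linarith : 1 - p < 1)).mul_right (1 - p)

/-- The bound `logIncrement k ≤ 1 / (k + 1)` compares the series with that of `-log (1 - q)`. -/
lemma tsum_logIncrement_mul_pow_le {q : ℝ} (hq0 : 0 < q) (hq1 : q < 1) :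
    ∑' k, logIncrement k * q ^ k ≤ -Real.log (1 - q) / q := by
  have hlog := (Real.hasSum_pow_div_log_of_abs_lt_one (abs_lt.2 ⟨by linarith, hq1⟩)).div_const q
  refine hasSum_le (fun k => ?_) (summable_logIncrement_mul_pow hq0.le hq1).hasSum hlog
  calc logIncrement k * q ^ k ≤ 1 / ((k : ℝ) + 1) * q ^ k :=
        mul_le_mul_of_nonneg_right (logIncrement_le_one_div k) (by positivity)
    _ = q ^ (k + 1) / (k + 1) / q := by field_simp; ring

lemma summable_logIncrement_mul_jointSurvival (hp0 : 0 < p) (hp : p ≤ 1 / 2) :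
    Summable fun kl : ℕ × ℕ =>
      logIncrement kl.1 * logIncrement kl.2 * jointSurvival p kl.1 kl.2 := by
  have hu := summable_logIncrement_mul_survival hp0 (by linarith)
  have hu0 : 0 ≤ fun k => logIncrement k * (1 - p) ^ (k + 1) := fun k =>
    mul_nonneg (logIncrement_nonneg k) (pow_nonneg (by linarith) _)
  refine (hu.mul_of_nonneg hu hu0 hu0).of_nonneg_of_le (fun kl => ?_) fun kl => ?_
  · exact mul_nonneg (mul_nonneg (logIncrement_nonneg _) (logIncrement_nonneg _))
      (jointSurvival_nonneg hp _ _)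
  · calc _ ≤ logIncrement kl.1 * logIncrement kl.2 *
          ((1 - p) ^ (kl.1 + 1) * (1 - p) ^ (kl.2 + 1)) :=
          mul_le_mul_of_nonneg_left (jointSurvival_le hp _ _)
            (mul_nonneg (logIncrement_nonneg _) (logIncrement_nonneg _))
      _ = _ := by ring

noncomputable def logCovTerm (p : ℝ) (k l : ℕ) : ℝ :=
  logIncrement k * logIncrement l * (jointSurvival p k l - (1 - p) ^ (k + 1) * (1 - p) ^ (l + 1))

noncomputable def logCovSeries (p : ℝ) : ℝ := ∑' kl : ℕ × ℕ, logCovTerm p kl.1 kl.2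

lemma logCovSeries_eq (hp0 : 0 < p) (hp : p ≤ 1 / 2) :
    logCovSeries p =
      ∑' kl : ℕ × ℕ, logIncrement kl.1 * logIncrement kl.2 * jointSurvival p kl.1 kl.2 -
        (∑' k, logIncrement k * (1 - p) ^ (k + 1)) * ∑' l, logIncrement l * (1 - p) ^ (l + 1) := by
  set u : ℕ → ℝ := fun k => logIncrement k * (1 - p) ^ (k + 1)
  have hu : Summable u := summable_logIncrement_mul_survival hp0 (by linarith)
  have hu0 : 0 ≤ u := fun k => mul_nonneg (logIncrement_nonneg k) (pow_nonneg (by linarith) _)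
  have hprod : (∑' k, u k) * ∑' l, u l = ∑' kl : ℕ × ℕ, u kl.1 * u kl.2 :=
    tsum_mul_tsum_of_summable_norm hu.abs hu.abs
  rw [hprod, ← (summable_logIncrement_mul_jointSurvival hp0 hp).tsum_sub
      (hu.mul_of_nonneg hu hu0 hu0)]
  exact tsum_congr fun kl => by rw [logCovTerm]; ring

lemma logCovTerm_nonpos (hp : p ≤ 1 / 2) (k l : ℕ) : logCovTerm p k l ≤ 0 :=
  mul_nonpos_of_nonneg_of_nonpos (mul_nonneg (logIncrement_nonneg k) (logIncrement_nonneg l))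
    (sub_nonpos.2 (jointSurvival_le hp k l))

lemma logCovSeries_nonpos (hp : p ≤ 1 / 2) : logCovSeries p ≤ 0 :=
  tsum_nonpos fun kl => logCovTerm_nonpos hp kl.1 kl.2

lemma neg_le_logCovTerm (hp : p ≤ 1 / 2) (k l : ℕ) :
    -(p ^ 2 * (1 - p) ^ k * (logIncrement l * (1 - p) ^ l)) ≤ logCovTerm p k l := by
  have hq : 0 ≤ 1 - p := by linarith
  have hk : ((min k l : ℕ) + 1 : ℝ) * logIncrement k ≤ 1 :=
    (mul_le_mul_of_nonneg_right (by gcongr; exact min_le_left k l) (logIncrement_nonneg k)).trans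
      (mul_logIncrement_le_one k)
  have hgap := mul_le_mul_of_nonneg_left (sub_jointSurvival_le hp k l)
    (mul_nonneg (logIncrement_nonneg k) (logIncrement_nonneg l))
  have hrest : 0 ≤ p ^ 2 * (1 - p) ^ k * (logIncrement l * (1 - p) ^ l) := by
    have := logIncrement_nonneg l
    positivity
  calc -(p ^ 2 * (1 - p) ^ k * (logIncrement l * (1 - p) ^ l))
      ≤ -(((min k l : ℕ) + 1) * logIncrement k *
          (p ^ 2 * (1 - p) ^ k * (logIncrement l * (1 - p) ^ l))) :=
        neg_le_neg (mul_le_of_le_one_left hrest hk)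
    _ = -(logIncrement k * logIncrement l * (((min k l : ℕ) + 1) * p ^ 2 * (1 - p) ^ (k + l))) := by
        ring
    _ ≤ -(logIncrement k * logIncrement l *
          ((1 - p) ^ (k + 1) * (1 - p) ^ (l + 1) - jointSurvival p k l)) := neg_le_neg hgap
    _ = logCovTerm p k l := by rw [logCovTerm]; ring

lemma neg_le_logCovSeries (hp0 : 0 < p) (hp : p ≤ 1 / 2) :
    -(p / (1 - p) * Real.log (1 / p)) ≤ logCovSeries p := by
  have hq0 : 0 ≤ 1 - p := by linarith
  have hq1 : 1 - p < 1 := by linarith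
  set a : ℕ → ℝ := fun k => p ^ 2 * (1 - p) ^ k
  set b : ℕ → ℝ := fun l => logIncrement l * (1 - p) ^ l
  have ha : Summable a := (summable_geometric_of_lt_one hq0 hq1).mul_left (p ^ 2)
  have hb : Summable b := summable_logIncrement_mul_pow hq0 hq1
  have ha0 : 0 ≤ a := fun k => by positivity
  have hb0 : 0 ≤ b := fun l => mul_nonneg (logIncrement_nonneg l) (pow_nonneg hq0 l)
  have hab : Summable fun kl : ℕ × ℕ => a kl.1 * b kl.2 := ha.mul_of_nonneg hb ha0 hb0
  have hterm (kl : ℕ × ℕ) : -(a kl.1 * b kl.2) ≤ logCovTerm p kl.1 kl.2 :=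
    neg_le_logCovTerm hp kl.1 kl.2
  have hsum : ∑' kl : ℕ × ℕ, a kl.1 * b kl.2 ≤ p / (1 - p) * Real.log (1 / p) := by
    have hprod : (∑' k, a k) * ∑' l, b l = ∑' kl : ℕ × ℕ, a kl.1 * b kl.2 :=
      tsum_mul_tsum_of_summable_norm ha.abs hb.abs
    have hgeom : ∑' k, a k = p := by
      rw [tsum_mul_left, tsum_geometric_of_lt_one hq0 hq1, sub_sub_cancel]
      field_simp
    rw [← hprod, hgeom]
    calc p * ∑' l, b l ≤ p * (-Real.log (1 - (1 - p)) / (1 - p)) :=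
        mul_le_mul_of_nonneg_left (tsum_logIncrement_mul_pow_le (by linarith) hq1) hp0.le
      _ = p / (1 - p) * Real.log (1 / p) := by
        rw [sub_sub_cancel, one_div, Real.log_inv]; ring
  calc -(p / (1 - p) * Real.log (1 / p)) ≤ -∑' kl : ℕ × ℕ, a kl.1 * b kl.2 := neg_le_neg hsum
    _ = ∑' kl : ℕ × ℕ, -(a kl.1 * b kl.2) := tsum_neg.symm
    _ ≤ logCovSeries p := hab.neg.tsum_le_tsum hterm <| hab.of_norm_bounded fun kl =>
        abs_le.2 ⟨hterm kl, (logCovTerm_nonpos hp _ _).trans (mul_nonneg (ha0 kl.1) (hb0 kl.2))⟩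

end Series

section Integral

variable {Ω : Type*} [MeasurableSpace Ω] {μ : Measure Ω} [IsFiniteMeasure μ]

lemma integral_tsum_indicator_const {ι : Type*} [Countable ι] {E : ι → Set Ω}
    (hE : ∀ i, MeasurableSet (E i)) {c : ι → ℝ} (hc : ∀ i, 0 ≤ c i)
    (hsum : Summable fun i => c i * μ.real (E i)) :
    ∫ ω, ∑' i, (E i).indicator (fun _ => c i) ω ∂μ = ∑' i, c i * μ.real (E i) := by
  have hlint (i : ι) : ∫⁻ ω, ‖(E i).indicator (fun _ => c i) ω‖ₑ ∂μ =
      ENNReal.ofReal (c i * μ.real (E i)) := by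
    simp_rw [enorm_indicator_eq_indicator_enorm, Real.enorm_of_nonneg (hc i)]
    rw [lintegral_indicator_const (hE i), ENNReal.ofReal_mul (hc i), ofReal_measureReal]
  rw [integral_tsum (fun i => (measurable_const.indicator (hE i)).aestronglyMeasurable)]
  · exact tsum_congr fun i => by rw [integral_indicator_const _ (hE i), smul_eq_mul, mul_comm]
  · simp_rw [hlint]
    rw [← ENNReal.ofReal_tsum_of_nonneg (fun i => mul_nonneg (hc i) measureReal_nonneg) hsum]
    exact ENNReal.ofReal_ne_top

lemma integral_log_natCast {R : Ω → ℕ} (hE : ∀ k, MeasurableSet {ω | k + 2 ≤ R ω})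
    (hsum : Summable fun k => logIncrement k * μ.real {ω | k + 2 ≤ R ω}) :
    ∫ ω, Real.log (R ω) ∂μ = ∑' k, logIncrement k * μ.real {ω | k + 2 ≤ R ω} := by
  rw [← integral_tsum_indicator_const hE logIncrement_nonneg hsum]
  simp only [Real.log_natCast_eq_tsum, Set.indicator_apply, Set.mem_ofPred_eq]

lemma integral_log_natCast_mul_log_natCast {R S : Ω → ℕ}
    (hE : ∀ k, MeasurableSet {ω | k + 2 ≤ R ω}) (hF : ∀ l, MeasurableSet {ω | l + 2 ≤ S ω})
    (hsum : Summable fun kl : ℕ × ℕ => logIncrement kl.1 * logIncrement kl.2 *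
      μ.real ({ω | kl.1 + 2 ≤ R ω} ∩ {ω | kl.2 + 2 ≤ S ω})) :
    ∫ ω, Real.log (R ω) * Real.log (S ω) ∂μ = ∑' kl : ℕ × ℕ, logIncrement kl.1 *
      logIncrement kl.2 * μ.real ({ω | kl.1 + 2 ≤ R ω} ∩ {ω | kl.2 + 2 ≤ S ω}) := by
  refine Eq.trans ?_ <| integral_tsum_indicator_const (μ := μ)
    (E := fun kl : ℕ × ℕ => {ω | kl.1 + 2 ≤ R ω} ∩ {ω | kl.2 + 2 ≤ S ω})
    (c := fun kl => logIncrement kl.1 * logIncrement kl.2) (fun kl => (hE kl.1).inter (hF kl.2))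
    (fun kl => mul_nonneg (logIncrement_nonneg kl.1) (logIncrement_nonneg kl.2)) hsum
  simp only [Real.log_natCast_mul_log_natCast_eq_tsum, Set.indicator_apply, Set.mem_inter_iff,
    Set.mem_ofPred_eq]

end Integral

/-- Since `sInf ∅ = 0`, a target that is never hit gives hitting time `0`; hence the second
conjunct. -/
lemma add_two_le_sInf_iff {α : Type*} {x : ℕ → α} {b : α} {k : ℕ} :
    k + 2 ≤ sInf {t | 1 ≤ t ∧ x t = b} ↔ (∀ t < k + 1, x (t + 1) ≠ b) ∧ ∃ t, x (t + 1) = b := by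
  constructor
  · intro h
    have hne : {t | 1 ≤ t ∧ x t = b}.Nonempty := by
      by_contra hemp
      rw [Set.not_nonempty_iff_eq_empty.1 hemp, Nat.sInf_empty] at h
      omega
    obtain ⟨h1, h2⟩ := Nat.sInf_mem hne
    refine ⟨fun t ht hxt => ?_, sInf {t | 1 ≤ t ∧ x t = b} - 1, by rwa [Nat.sub_add_cancel h1]⟩
    have := Nat.sInf_le (show t + 1 ∈ {t | 1 ≤ t ∧ x t = b} from ⟨by omega, hxt⟩)
    omega
  · rintro ⟨hbefore, t, ht⟩
    obtain ⟨h1, h2⟩ := Nat.sInf_mem (⟨t + 1, by omega, ht⟩ : {t | 1 ≤ t ∧ x t = b}.Nonempty)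
    by_contra! hlt
    exact hbefore (sInf {t | 1 ≤ t ∧ x t = b} - 1) (by omega) (by rwa [Nat.sub_add_cancel h1])

section HittingTime

variable {Ω α : Type*} {X : ℕ → Ω → α} {b : α} {R : Ω → ℕ}

lemma setOf_add_two_le_eq (hR : ∀ ω, R ω = sInf {t | 1 ≤ t ∧ X t ω = b}) (k : ℕ) :
    {ω | k + 2 ≤ R ω} = (⋂ t ∈ range (k + 1), X (t + 1) ⁻¹' {b}ᶜ) ∩ ⋃ t, X (t + 1) ⁻¹' {b} := by
  ext ω
  simp [hR, add_two_le_sInf_iff]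

lemma measurableSet_add_two_le [MeasurableSpace Ω] [MeasurableSpace α]
    [MeasurableSingletonClass α] (hX : ∀ t, Measurable (X t))
    (hR : ∀ ω, R ω = sInf {t | 1 ≤ t ∧ X t ω = b}) (k : ℕ) :
    MeasurableSet {ω | k + 2 ≤ R ω} := by
  rw [setOf_add_two_le_eq hR]
  exact (Finset.measurableSet_biInter _ fun t _ => hX _ (measurableSet_singleton b).compl).inter
    (.iUnion fun t => hX _ (measurableSet_singleton b))

end HittingTime

lemma ProbabilityTheory.iIndepFun.measureReal_biInter_preimage {Ω ι β : Type*}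
    [MeasurableSpace Ω] {μ : Measure Ω} [IsFiniteMeasure μ] [MeasurableSpace β] {X : ι → Ω → β}
    (hind : iIndepFun X μ) (s : Finset ι) {T : ι → Set β} (hT : ∀ t ∈ s, MeasurableSet (T t)) :
    μ.real (⋂ t ∈ s, X t ⁻¹' T t) = ∏ t ∈ s, μ.real (X t ⁻¹' T t) := by
  simp only [measureReal_def]
  rw [hind.meas_biInter fun t ht => ⟨T t, hT t ht, rfl⟩, ENNReal.toReal_prod]

section UniformProcess

variable {Ω : Type*} [MeasurableSpace Ω] {μ : Measure Ω} [IsProbabilityMeasure μ] {N : ℕ}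
  {X : ℕ → Ω → Fin N}

lemma measureReal_preimage_compl_finset_s18 {Y : Ω → Fin N} (hY : Measurable Y)
    (hunif : ∀ a, μ {ω | Y ω = a} = 1 / N) (B : Finset (Fin N)) :
    μ.real (Y ⁻¹' (↑B)ᶜ) = 1 - #B / N := by
  rw [Set.preimage_compl, probReal_compl_eq_one_sub (hY MeasurableSet.of_discrete),
    ← sum_measureReal_preimage_singleton B fun _ _ => hY MeasurableSet.of_discrete]
  simp [measureReal_def, Set.preimage, hunif, div_eq_mul_inv]

lemma measureReal_preimage_compl_singleton {Y : Ω → Fin N} (hY : Measurable Y)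
    (hunif : ∀ a, μ {ω | Y ω = a} = 1 / N) (b : Fin N) :
    μ.real (Y ⁻¹' {b}ᶜ) = 1 - 1 / N := by
  simpa using measureReal_preimage_compl_finset_s18 hY hunif {b}

lemma measureReal_preimage_compl_pair {Y : Ω → Fin N} (hY : Measurable Y)
    (hunif : ∀ a, μ {ω | Y ω = a} = 1 / N) {b c : Fin N} (hbc : b ≠ c) :
    μ.real (Y ⁻¹' {b, c}ᶜ) = 1 - 2 * (1 / N) := by
  simpa [card_pair hbc, div_eq_mul_inv] using measureReal_preimage_compl_finset_s18 hY hunif {b, c}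

lemma measureReal_biInter_range_preimage_compl (hX : ∀ t, Measurable (X t))
    (hind : iIndepFun X μ) (hunif : ∀ t a, μ {ω | X t ω = a} = 1 / N) (b : Fin N) (n : ℕ) :
    μ.real (⋂ t ∈ range n, X (t + 1) ⁻¹' {b}ᶜ) = (1 - 1 / N) ^ n := by
  rw [(hind.precomp (add_left_injective 1)).measureReal_biInter_preimage _
    fun _ _ => .of_discrete, prod_congr rfl fun t _ =>
    measureReal_preimage_compl_singleton (hX _) (hunif _) b, prod_const, card_range]

lemma measure_compl_iUnion_preimage_singleton (hX : ∀ t, Measurable (X t))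
    (hind : iIndepFun X μ) (hunif : ∀ t a, μ {ω | X t ω = a} = 1 / N) (b : Fin N) :
    μ (⋃ t, X (t + 1) ⁻¹' {b})ᶜ = 0 := by
  have hN : (1 : ℝ) ≤ N := by exact_mod_cast b.pos
  have hq0 : 0 ≤ 1 - 1 / (N : ℝ) := by rw [sub_nonneg]; exact div_le_one_of_le₀ hN (by positivity)
  have hq1 : 1 - 1 / (N : ℝ) < 1 := sub_lt_self 1 (by positivity)
  have hle (n : ℕ) : μ.real (⋃ t, X (t + 1) ⁻¹' {b})ᶜ ≤ (1 - 1 / N) ^ n :=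
    calc μ.real (⋃ t, X (t + 1) ⁻¹' {b})ᶜ ≤ μ.real (⋂ t ∈ range n, X (t + 1) ⁻¹' {b}ᶜ) :=
          measureReal_mono fun ω hω => by simp_all
      _ = (1 - 1 / N) ^ n := measureReal_biInter_range_preimage_compl hX hind hunif b n
  exact (measureReal_eq_zero_iff (measure_ne_top _ _)).1 <| le_antisymm
    (ge_of_tendsto' (tendsto_pow_atTop_nhds_zero_of_lt_one hq0 hq1) hle) measureReal_nonneg

lemma measureReal_add_two_le_hitTime (hX : ∀ t, Measurable (X t)) (hind : iIndepFun X μ)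
    (hunif : ∀ t a, μ {ω | X t ω = a} = 1 / N) {b : Fin N} {R : Ω → ℕ}
    (hR : ∀ ω, R ω = sInf {t | 1 ≤ t ∧ X t ω = b}) (k : ℕ) :
    μ.real {ω | k + 2 ≤ R ω} = (1 - 1 / N) ^ (k + 1) := by
  rw [setOf_add_two_le_eq hR, measureReal_def,
    measure_inter_conull (measure_compl_iUnion_preimage_singleton hX hind hunif b),
    ← measureReal_def, measureReal_biInter_range_preimage_compl hX hind hunif b]

lemma measureReal_add_two_le_inter_hitTime_of_le (hX : ∀ t, Measurable (X t))
    (hind : iIndepFun X μ) (hunif : ∀ t a, μ {ω | X t ω = a} = 1 / N) {bi bj : Fin N}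
    (hb : bi ≠ bj) {Ri Rj : Ω → ℕ} (hRi : ∀ ω, Ri ω = sInf {t | 1 ≤ t ∧ X t ω = bi})
    (hRj : ∀ ω, Rj ω = sInf {t | 1 ≤ t ∧ X t ω = bj}) {k l : ℕ} (hkl : k ≤ l) :
    μ.real ({ω | k + 2 ≤ Ri ω} ∩ {ω | l + 2 ≤ Rj ω}) =
      (1 - 2 * (1 / N)) ^ (k + 1) * (1 - 1 / N) ^ (l - k) := by
  set T : ℕ → Set (Fin N) := fun t => if t < k + 1 then {bi, bj}ᶜ else {bj}ᶜ
  have hT (t : ℕ) : μ.real (X (t + 1) ⁻¹' T t) =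
      if t < k + 1 then 1 - 2 * (1 / (N : ℝ)) else 1 - 1 / (N : ℝ) := by
    simp only [T]
    split_ifs
    · exact measureReal_preimage_compl_pair (hX _) (hunif _) hb
    · exact measureReal_preimage_compl_singleton (hX _) (hunif _) bj
  have hnull : μ ((⋃ t, X (t + 1) ⁻¹' {bi}) ∩ ⋃ t, X (t + 1) ⁻¹' {bj})ᶜ = 0 := by
    rw [Set.compl_inter]
    exact measure_union_null (measure_compl_iUnion_preimage_singleton hX hind hunif bi)
      (measure_compl_iUnion_preimage_singleton hX hind hunif bj)
  have hset : (⋂ t ∈ range (k + 1), X (t + 1) ⁻¹' {bi}ᶜ) ∩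
      (⋂ t ∈ range (l + 1), X (t + 1) ⁻¹' {bj}ᶜ) = ⋂ t ∈ range (l + 1), X (t + 1) ⁻¹' T t := by
    ext ω
    simp only [T, Set.mem_inter_iff, Set.mem_iInter, mem_range, Set.mem_preimage]
    grind
  rw [setOf_add_two_le_eq hRi, setOf_add_two_le_eq hRj, Set.inter_inter_inter_comm,
    measureReal_def, measure_inter_conull hnull, ← measureReal_def, hset,
    (hind.precomp (add_left_injective 1)).measureReal_biInter_preimage _ fun _ _ => .of_discrete,
    ← prod_range_mul_prod_Ico _ (by omega : k + 1 ≤ l + 1),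
    prod_congr rfl fun t ht => (hT t).trans (if_pos (mem_range.1 ht)),
    prod_congr rfl fun t ht => (hT t).trans (if_neg (by simp at ht; omega)),
    prod_const, prod_const, card_range, Nat.card_Ico, Nat.add_sub_add_right]

lemma measureReal_add_two_le_inter_hitTime (hX : ∀ t, Measurable (X t)) (hind : iIndepFun X μ)
    (hunif : ∀ t a, μ {ω | X t ω = a} = 1 / N) {bi bj : Fin N} (hb : bi ≠ bj) {Ri Rj : Ω → ℕ}
    (hRi : ∀ ω, Ri ω = sInf {t | 1 ≤ t ∧ X t ω = bi})
    (hRj : ∀ ω, Rj ω = sInf {t | 1 ≤ t ∧ X t ω = bj}) (k l : ℕ) :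
    μ.real ({ω | k + 2 ≤ Ri ω} ∩ {ω | l + 2 ≤ Rj ω}) = jointSurvival (1 / N) k l := by
  rcases le_total k l with h | h
  · rw [jointSurvival_of_le _ h,
      measureReal_add_two_le_inter_hitTime_of_le hX hind hunif hb hRi hRj h]
  · rw [jointSurvival_comm, jointSurvival_of_le _ h, Set.inter_comm,
      measureReal_add_two_le_inter_hitTime_of_le hX hind hunif hb.symm hRj hRi h]

lemma integral_log_hitTime (hX : ∀ t, Measurable (X t)) (hind : iIndepFun X μ)
    (hunif : ∀ t a, μ {ω | X t ω = a} = 1 / N) {b : Fin N} {R : Ω → ℕ}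
    (hR : ∀ ω, R ω = sInf {t | 1 ≤ t ∧ X t ω = b}) :
    ∫ ω, Real.log (R ω) ∂μ = ∑' k, logIncrement k * (1 - 1 / N) ^ (k + 1) := by
  have hN : (1 : ℝ) ≤ N := by exact_mod_cast b.pos
  simp_rw [← measureReal_add_two_le_hitTime hX hind hunif hR]
  refine integral_log_natCast (measurableSet_add_two_le hX hR) ?_
  simp_rw [measureReal_add_two_le_hitTime hX hind hunif hR]
  exact summable_logIncrement_mul_survival (by positivity) (div_le_one_of_le₀ hN (by positivity))

lemma integral_log_hitTime_mul_log_hitTime (hX : ∀ t, Measurable (X t)) (hind : iIndepFun X μ)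
    (hunif : ∀ t a, μ {ω | X t ω = a} = 1 / N) {bi bj : Fin N} (hb : bi ≠ bj) {Ri Rj : Ω → ℕ}
    (hRi : ∀ ω, Ri ω = sInf {t | 1 ≤ t ∧ X t ω = bi})
    (hRj : ∀ ω, Rj ω = sInf {t | 1 ≤ t ∧ X t ω = bj}) :
    ∫ ω, Real.log (Ri ω) * Real.log (Rj ω) ∂μ = ∑' kl : ℕ × ℕ,
      logIncrement kl.1 * logIncrement kl.2 * jointSurvival (1 / N) kl.1 kl.2 := by
  have hN : (2 : ℝ) ≤ N := by exact_mod_cast Fin.nontrivial_iff_two_le.1 ⟨⟨bi, bj, hb⟩⟩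
  simp_rw [← measureReal_add_two_le_inter_hitTime hX hind hunif hb hRi hRj]
  refine integral_log_natCast_mul_log_natCast (measurableSet_add_two_le hX hRi)
    (measurableSet_add_two_le hX hRj) ?_
  simp_rw [measureReal_add_two_le_inter_hitTime hX hind hunif hb hRi hRj]
  exact summable_logIncrement_mul_jointSurvival (by positivity)
    (one_div_le_one_div_of_le (by norm_num) hN)

end UniformProcess

/-- For i.i.d. uniform draws on an alphabet of size `N ≥ 3` with `p = 1/N`, and
hitting times `R_i, R_j` of two distinct targets, the covariance of `log R_i` and
`log R_j` is nonpositive and bounded below by `−C p log(1/p)` for an absolute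
constant `C`; hence `|Cov(log R_i, log R_j)| = O(p log(1/p))`. -/
theorem hitting_time_log_covariance_bound :
    ∃ C > (0 : ℝ),
      ∀ (N : ℕ), 3 ≤ N →
      ∀ {Ω : Type} [inst : MeasurableSpace Ω] (μ : Measure Ω), ∀ [IsProbabilityMeasure μ],
      ∀ (X : ℕ → Ω → Fin N), (∀ i, Measurable (X i)) →
        iIndepFun X μ →
        (∀ i (a : Fin N), μ {ω | X i ω = a} = 1 / N) →
      ∀ (bi bj : Fin N), bi ≠ bj →
      ∀ (Ri Rj : Ω → ℕ),
        (∀ ω, Ri ω = sInf {t | 1 ≤ t ∧ X t ω = bi}) →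
        (∀ ω, Rj ω = sInf {t | 1 ≤ t ∧ X t ω = bj}) →
      ((∫ ω, Real.log (Ri ω) * Real.log (Rj ω) ∂μ) -
          (∫ ω, Real.log (Ri ω) ∂μ) * ∫ ω, Real.log (Rj ω) ∂μ ≤ 0) ∧
      (-(C * (1 / N) * Real.log N) ≤
        (∫ ω, Real.log (Ri ω) * Real.log (Rj ω) ∂μ) -
          (∫ ω, Real.log (Ri ω) ∂μ) * ∫ ω, Real.log (Rj ω) ∂μ) := by
  refine ⟨3 / 2, by norm_num, fun N hN Ω _ μ _ X hX hind hunif bi bj hb Ri Rj hRi hRj => ?_⟩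
  have hp0 : (0 : ℝ) < 1 / N := by positivity
  have hp3 : (1 : ℝ) / N ≤ 1 / 3 := one_div_le_one_div_of_le (by norm_num) (by exact_mod_cast hN)
  have hp : (1 : ℝ) / N ≤ 1 / 2 := by linarith
  rw [integral_log_hitTime_mul_log_hitTime hX hind hunif hb hRi hRj,
    integral_log_hitTime hX hind hunif hRi, integral_log_hitTime hX hind hunif hRj,
    ← logCovSeries_eq hp0 hp]
  refine ⟨logCovSeries_nonpos hp, le_trans ?_ (neg_le_logCovSeries hp0 hp)⟩
  have hratio : (1 : ℝ) / N / (1 - 1 / N) ≤ 3 / 2 * (1 / N) := by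
    rw [div_le_iff₀ (by linarith)]
    nlinarith
  have hlog : 0 ≤ Real.log N := Real.log_nonneg (Nat.one_le_cast.2 (by omega))
  rw [one_div_one_div]
  exact neg_le_neg (mul_le_mul_of_nonneg_right hratio hlog)
end
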